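/- arXiv:1210.7509 — 6 statements merged into one kernel-verified Lean document; each statement's English description precedes it below -/
import Mathlib

section
/- Let X be a Banach space and let S(t) be a well-posed continuous dynamical system on X. If S exhibits long-time strong instability near every point of some dense subset D of X, then the set {φ ∈ X : sup_{t>0} ‖S(t)φ‖_X < ∞} of initial data with bounded forward orbit is meager in X (a countable union of nowhere dense sets); consequently the set of φ ∈ X whose forward orbit is unbounded is residual in X, and in particular nonempty. -/
open scoped BigOperators ENNReal NNReal
open Complex

noncomputable section

/-- Frequencies in `ℤ²`. -/
abbrev Z2 : Type := ℤ × ℤ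

/-- Squared Euclidean norm `|n|²` on `ℤ²`. -/
def sq2 (n : Z2) : ℤ := n.1 ^ 2 + n.2 ^ 2

/-- Euclidean dot product on `ℤ²`. -/
def dot2 (m n : Z2) : ℤ := m.1 * n.1 + m.2 * n.2

/-- The resonance factor `ω₄ = |n1|² - |n2|² + |n3|² - |n4|²`. -/
def omega4 (n1 n2 n3 n4 : Z2) : ℤ := sq2 n1 - sq2 n2 + sq2 n3 - sq2 n4

/-- Right-hand side (already multiplied by `i`, i.e. `a_n' = i·(…)`) of the FNLS system
`-i a_n' = -|a_n|² a_n + Σ_{Γ(n)} a_{n1} conj(a_{n2}) a_{n3} e^{i ω₄ t}`. -/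
def fnlsRHS (a : Z2 → ℂ) (n : Z2) (t : ℝ) : ℂ :=
  Complex.I * (-((‖a n‖ : ℂ) ^ 2) * a n +
    ∑' p : Z2 × Z2 × Z2,
      if p.1 - p.2.1 + p.2.2 = n ∧ p.1 ≠ n ∧ p.2.2 ≠ n then
        a p.1 * (starRingEnd ℂ) (a p.2.1) * a p.2.2 *
          Complex.exp (Complex.I * ((omega4 p.1 p.2.1 p.2.2 n : ℤ) : ℂ) * (t : ℂ))
      else 0)

/-- Right-hand side of the `R`-truncated system (interactions with `|ω₄| ≤ R` only). -/
def truncRHS (R : ℕ) (a : Z2 → ℂ) (n : Z2) (t : ℝ) : ℂ :=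
  Complex.I * (-((‖a n‖ : ℂ) ^ 2) * a n +
    ∑' p : Z2 × Z2 × Z2,
      if p.1 - p.2.1 + p.2.2 = n ∧ p.1 ≠ n ∧ p.2.2 ≠ n ∧
          |omega4 p.1 p.2.1 p.2.2 n| ≤ (R : ℤ) then
        a p.1 * (starRingEnd ℂ) (a p.2.1) * a p.2.2 *
          Complex.exp (Complex.I * ((omega4 p.1 p.2.1 p.2.2 n : ℤ) : ℂ) * (t : ℂ))
      else 0)

/-- Right-hand side of the resonant system RFNLS (only `ω₄ = 0` interactions, no phases). -/
def resRHS (a : Z2 → ℂ) (n : Z2) : ℂ :=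
  Complex.I * (-((‖a n‖ : ℂ) ^ 2) * a n +
    ∑' p : Z2 × Z2 × Z2,
      if p.1 - p.2.1 + p.2.2 = n ∧ p.1 ≠ n ∧ p.2.2 ≠ n ∧
          omega4 p.1 p.2.1 p.2.2 n = 0 then
        a p.1 * (starRingEnd ℂ) (a p.2.1) * a p.2.2
      else 0)

/-- `a` is a solution of the FNLS system on the set `I`: absolutely summable values,
locally bounded `ℓ¹` norm, and coordinatewise differentiable satisfying the equation. -/
def IsFNLSSolution (I : Set ℝ) (a : ℝ → Z2 → ℂ) : Prop :=
  (∀ t ∈ I, Summable fun n : Z2 => ‖a t n‖) ∧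
  (∀ t1 ∈ I, ∀ t2 ∈ I, ∃ C : ℝ, ∀ t ∈ Set.Icc t1 t2 ∩ I, (∑' n : Z2, ‖a t n‖) ≤ C) ∧
  (∀ n : Z2, ∀ t ∈ I, HasDerivWithinAt (fun τ => a τ n) (fnlsRHS (a t) n t) I t)

/-- `a` is a solution of the `R`-truncated system on `I`. -/
def IsTruncSolution (R : ℕ) (I : Set ℝ) (a : ℝ → Z2 → ℂ) : Prop :=
  (∀ t ∈ I, Summable fun n : Z2 => ‖a t n‖) ∧
  (∀ t1 ∈ I, ∀ t2 ∈ I, ∃ C : ℝ, ∀ t ∈ Set.Icc t1 t2 ∩ I, (∑' n : Z2, ‖a t n‖) ≤ C) ∧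
  (∀ n : Z2, ∀ t ∈ I, HasDerivWithinAt (fun τ => a τ n) (truncRHS R (a t) n t) I t)

/-- `a` is a solution of the resonant system RFNLS on `I`. -/
def IsRFNLSSolution (I : Set ℝ) (a : ℝ → Z2 → ℂ) : Prop :=
  (∀ t ∈ I, Summable fun n : Z2 => ‖a t n‖) ∧
  (∀ t1 ∈ I, ∀ t2 ∈ I, ∃ C : ℝ, ∀ t ∈ Set.Icc t1 t2 ∩ I, (∑' n : Z2, ‖a t n‖) ≤ C) ∧
  (∀ n : Z2, ∀ t ∈ I, HasDerivWithinAt (fun τ => a τ n) (resRHS (a t) n) I t)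

/-- The square of the `h^s` norm `Σ (1+|n|²)^s |a_n|²`, valued in `ℝ≥0∞`. -/
def hsNormSqE (s : ℝ) (a : Z2 → ℂ) : ℝ≥0∞ :=
  ∑' n : Z2, ENNReal.ofReal ((1 + (sq2 n : ℝ)) ^ s * ‖a n‖ ^ 2)

/-- The toy system with `P` modes `b_1, …, b_P`, with the convention `b_0 = b_{P+1} = 0`. -/
def IsToySolution (P : ℕ) (I : Set ℝ) (b : ℝ → ℕ → ℂ) : Prop :=
  (∀ t ∈ I, b t 0 = 0) ∧
  (∀ t ∈ I, ∀ j : ℕ, P < j → b t j = 0) ∧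
  (∀ j : ℕ, 1 ≤ j → j ≤ P → ∀ t ∈ I,
    HasDerivWithinAt (fun τ => b τ j)
      (Complex.I * (-((‖b t j‖ : ℂ) ^ 2) * b t j
        + 2 * (b t (j + 1)) ^ 2 * (starRingEnd ℂ) (b t j)
        + 2 * (b t (j - 1)) ^ 2 * (starRingEnd ℂ) (b t j))) I t)

/-- `S` satisfies the `R`-closure condition. -/
def RClosed (R : ℕ) (S : Set Z2) : Prop :=
  ∀ n1 n2 n3 : Z2, n1 ∈ S → n2 ∈ S → n3 ∈ S →
    |omega4 n1 n2 n3 (n1 - n2 + n3)| ≤ (R : ℤ) → n1 - n2 + n3 ∈ S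

/-- A rectangle in `ℤ²`: a quadruple of distinct points forming a parallelogram
(`n1 + n3 = n2 + n4`) with `ω₄ = 0`. -/
def IsRectangle (n1 n2 n3 n4 : Z2) : Prop :=
  n1 ≠ n2 ∧ n1 ≠ n3 ∧ n1 ≠ n4 ∧ n2 ≠ n3 ∧ n2 ≠ n4 ∧ n3 ≠ n4 ∧
  n1 + n3 = n2 + n4 ∧ sq2 n1 + sq2 n3 = sq2 n2 + sq2 n4

/-- Closure under completing rectangles: if three vertices of a rectangle lie in `S`,
then so does the fourth. -/
def RectClosed (S : Set Z2) : Prop :=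
  ∀ n1 n2 n3 n4 : Z2, IsRectangle n1 n2 n3 n4 → n1 ∈ S → n2 ∈ S → n3 ∈ S → n4 ∈ S

/-- A nuclear family: a rectangle with parents `n1, n3` in generation `Λ j` and
children `n2, n4` in generation `Λ (j+1)`. -/
def IsNuclearFamily (Λ : ℕ → Finset Z2) (j : ℕ) (n1 n2 n3 n4 : Z2) : Prop :=
  IsRectangle n1 n2 n3 n4 ∧ n1 ∈ Λ j ∧ n3 ∈ Λ j ∧ n2 ∈ Λ (j + 1) ∧ n4 ∈ Λ (j + 1)

/-- Existence and uniqueness (up to trivial permutations) of spouse and children. -/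
def SpouseChildren (Λ : ℕ → Finset Z2) (P : ℕ) : Prop :=
  ∀ j : ℕ, 1 ≤ j → j < P → ∀ n1 ∈ Λ j,
    ∃ n3 n2 n4 : Z2, IsNuclearFamily Λ j n1 n2 n3 n4 ∧
      ∀ n3' n2' n4' : Z2, IsNuclearFamily Λ j n1 n2' n3' n4' →
        n3' = n3 ∧ ((n2' = n2 ∧ n4' = n4) ∨ (n2' = n4 ∧ n4' = n2))

/-- Existence and uniqueness (up to trivial permutations) of sibling and parents. -/
def ParentsSibling (Λ : ℕ → Finset Z2) (P : ℕ) : Prop :=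
  ∀ j : ℕ, 1 ≤ j → j < P → ∀ n2 ∈ Λ (j + 1),
    ∃ n4 n1 n3 : Z2, IsNuclearFamily Λ j n1 n2 n3 n4 ∧
      ∀ n1' n3' n4' : Z2, IsNuclearFamily Λ j n1' n2 n3' n4' →
        n4' = n4 ∧ ((n1' = n1 ∧ n3' = n3) ∨ (n1' = n3 ∧ n3' = n1))

/-- Non-degeneracy: the sibling of a frequency is never equal to its spouse. -/
def NonDegenerate (Λ : ℕ → Finset Z2) : Prop :=
  ∀ j : ℕ, ∀ n1 n2 n3 n4 m2 m3 m4 : Z2,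
    IsNuclearFamily Λ j n1 n2 n3 n4 → IsNuclearFamily Λ (j + 1) n2 m2 m3 m4 → m3 ≠ n4

/-- The union `Λ_1 ∪ … ∪ Λ_P` of all generations. -/
def genFinset (Λ : ℕ → Finset Z2) (P : ℕ) : Finset Z2 := (Finset.Icc 1 P).biUnion Λ

/-- Faithfulness: the only rectangles in `Λ` are (permutations of) nuclear families. -/
def FaithfulGen (Λ : ℕ → Finset Z2) (P : ℕ) : Prop :=
  ∀ n1 n2 n3 n4 : Z2,
    n1 ∈ genFinset Λ P → n2 ∈ genFinset Λ P → n3 ∈ genFinset Λ P → n4 ∈ genFinset Λ P →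
    IsRectangle n1 n2 n3 n4 →
    ∃ j : ℕ, 1 ≤ j ∧ j < P ∧
      ((n1 ∈ Λ j ∧ n3 ∈ Λ j ∧ n2 ∈ Λ (j + 1) ∧ n4 ∈ Λ (j + 1)) ∨
       (n2 ∈ Λ j ∧ n4 ∈ Λ j ∧ n1 ∈ Λ (j + 1) ∧ n3 ∈ Λ (j + 1)))

/-- `S` contains at most one vertex of any rectangle having a vertex at `0`. -/
def NoRectangleWithZero (S : Set Z2) : Prop :=
  ∀ m2 m3 m4 : Z2, IsRectangle 0 m2 m3 m4 →
    ¬(m2 ∈ S ∧ m3 ∈ S) ∧ ¬(m2 ∈ S ∧ m4 ∈ S) ∧ ¬(m3 ∈ S ∧ m4 ∈ S)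

/-- `S1` and `S2` are not connected by any (nondegenerate) parallelogram of
eccentricity `≤ R`. -/
def NotConnected (R : ℕ) (S1 S2 : Set Z2) : Prop :=
  ∀ n1 n2 n3 : Z2,
    ((n1 ∈ S1 ∧ n2 ∈ S1 ∧ n3 ∈ S2) ∨ (n1 ∈ S2 ∧ n2 ∈ S2 ∧ n3 ∈ S1)) →
    (n1 ≠ n2 → n2 ≠ n3 → (R : ℤ) < |omega4 n1 n2 n3 (n1 - n2 + n3)|) ∧
    (n1 ≠ n3 → n3 ≠ n2 → (R : ℤ) < |omega4 n1 n3 n2 (n1 - n3 + n2)|)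

/-- A well-posed continuous dynamical system on a normed space `X`. -/
def IsWellPosedFlow {X : Type*} [NormedAddCommGroup X] (S : ℝ → X → X) : Prop :=
  (∀ x : X, S 0 x = x) ∧
  (∀ t1 t2 : ℝ, ∀ x : X, S (t1 + t2) x = S t1 (S t2 x)) ∧
  (∀ x : X, Continuous fun t : ℝ => S t x) ∧
  (∀ T : ℝ, 0 < T → ∀ x : X, ∀ ε : ℝ, 0 < ε → ∃ δ : ℝ, 0 < δ ∧ ∀ y : X, ‖x - y‖ ≤ δ →
     ∀ t ∈ Set.Icc (-T) T, ‖S t x - S t y‖ ≤ ε)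

/-- `sup_{t > 0} ‖S(t)x‖`, valued in `ℝ≥0∞`. -/
def supOrbitPos {X : Type*} [NormedAddCommGroup X] (S : ℝ → X → X) (x : X) : ℝ≥0∞ :=
  ⨆ t : Set.Ioi (0 : ℝ), (‖S (t : ℝ) x‖₊ : ℝ≥0∞)

/-- `sup_{t ∈ ℝ} ‖S(t)x‖`, valued in `ℝ≥0∞`. -/
def supOrbitAll {X : Type*} [NormedAddCommGroup X] (S : ℝ → X → X) (x : X) : ℝ≥0∞ :=
  ⨆ t : ℝ, (‖S t x‖₊ : ℝ≥0∞)

/-- Long-time strong instability of the flow `S` near `φ`. -/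
def LongTimeStrongInstability {X : Type*} [NormedAddCommGroup X]
    (S : ℝ → X → X) (φ : X) : Prop :=
  ∀ δ : ℝ, 0 < δ → δ < 1 → ∀ K : ℝ, 1 ≤ K →
    ∃ φs : X, ‖φ - φs‖ ≤ δ ∧ ENNReal.ofReal K ≤ supOrbitPos S φs

/-! Well-posedness makes each `φ ↦ ‖S(t)φ‖` continuous, so `φ ↦ sup_{t>0} ‖S(t)φ‖` is lower
semicontinuous and each set `{φ | n < sup_{t>0} ‖S(t)φ‖}` is open. Instability near the dense
set `D` makes these open sets dense, so by Baire their intersection, the set of unbounded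
forward orbits, is residual and nonempty. -/

theorem IsWellPosedFlow.continuous {X : Type*} [NormedAddCommGroup X] {S : ℝ → X → X}
    (hS : IsWellPosedFlow S) (t : ℝ) : Continuous (S t) := by
  refine Metric.continuous_iff.2 fun x ε hε => ?_
  obtain ⟨δ, hδ, hclose⟩ := hS.2.2.2 (|t| + 1) (by positivity) x (ε / 2) (half_pos hε)
  refine ⟨δ, hδ, fun y hy => ?_⟩
  have hyx : ‖x - y‖ ≤ δ := by rw [← dist_eq_norm, dist_comm]; exact hy.le
  have ht : t ∈ Set.Icc (-(|t| + 1)) (|t| + 1) := by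
    constructor <;> linarith [neg_abs_le t, le_abs_self t]
  rw [dist_eq_norm, norm_sub_rev]
  exact (hclose y hyx t ht).trans_lt (half_lt_self hε)

theorem lowerSemicontinuous_supOrbitPos {X : Type*} [NormedAddCommGroup X] {S : ℝ → X → X}
    (hS : ∀ t, Continuous (S t)) : LowerSemicontinuous (supOrbitPos S) :=
  lowerSemicontinuous_iSup fun t => (hS t).enorm.lowerSemicontinuous

theorem dense_setOf_natCast_lt_supOrbitPos {X : Type*} [NormedAddCommGroup X]
    {S : ℝ → X → X} {D : Set X} (hD : Dense D)
    (hinst : ∀ φ ∈ D, LongTimeStrongInstability S φ) (n : ℕ) :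
    Dense {φ : X | (n : ℝ≥0∞) < supOrbitPos S φ} := by
  refine Dense.of_closure (hD.mono fun φ hφ => Metric.mem_closure_iff.2 fun ε hε => ?_)
  obtain ⟨φs, hclose, hbig⟩ := hinst φ hφ (min (ε / 2) (1 / 2)) (by positivity)
    ((min_le_right _ _).trans_lt (by norm_num)) (n + 1) (by linarith [n.cast_nonneg (α := ℝ)])
  refine ⟨φs, ?_, ?_⟩
  · calc (n : ℝ≥0∞) = ENNReal.ofReal n := (ENNReal.ofReal_natCast n).symm
      _ < ENNReal.ofReal (n + 1) := by
        rw [ENNReal.ofReal_lt_ofReal_iff (by positivity)]; linarith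
      _ ≤ supOrbitPos S φs := hbig
  · calc dist φ φs = ‖φ - φs‖ := dist_eq_norm _ _
      _ ≤ min (ε / 2) (1 / 2) := hclose
      _ < ε := (min_le_left _ _).trans_lt (half_lt_self hε)

theorem longtime_instability_dense_implies_generic_unbounded_orbits_general
    {X : Type*} [NormedAddCommGroup X] [CompleteSpace X]
    (S : ℝ → X → X) (hS : IsWellPosedFlow S)
    (D : Set X) (hD : Dense D)
    (hinst : ∀ φ ∈ D, LongTimeStrongInstability S φ) :
    IsMeagre {φ : X | supOrbitPos S φ < ⊤} ∧
    {φ : X | supOrbitPos S φ = ⊤} ∈ residual X ∧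
    {φ : X | supOrbitPos S φ = ⊤}.Nonempty := by
  have hlsc := lowerSemicontinuous_supOrbitPos hS.continuous
  have hgt : ∀ n : ℕ, {φ : X | (n : ℝ≥0∞) < supOrbitPos S φ} ∈ residual X := fun n =>
    residual_of_dense_open (hlsc.isOpen_preimage n)
      (dense_setOf_natCast_lt_supOrbitPos hD hinst n)
  have hres : {φ : X | supOrbitPos S φ = ⊤} ∈ residual X := by
    filter_upwards [countable_iInter_mem.2 hgt] with φ hφ
    exact ENNReal.eq_top_of_forall_nnreal_le fun r =>
      let ⟨n, hn⟩ := exists_nat_gt r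
      (ENNReal.coe_le_coe.2 hn.le).trans ((Set.mem_iInter.1 hφ n).le)
  have hmeagre : IsMeagre {φ : X | supOrbitPos S φ < ⊤} := by
    simpa only [IsMeagre, Set.compl_ofPred, not_lt, top_le_iff] using hres
  exact ⟨hmeagre, hres, (dense_of_mem_residual hres).nonempty⟩

/-- If a well-posed continuous dynamical system on a Banach space
exhibits long-time strong instability near every point of a dense set, then the set of
initial data with bounded forward orbit is meager; consequently the set of unbounded
forward orbits is residual, in particular nonempty. -/
theorem longtime_instability_dense_implies_generic_unbounded_orbits
    {X : Type*} [NormedAddCommGroup X] [NormedSpace ℝ X] [CompleteSpace X]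
    (S : ℝ → X → X) (hS : IsWellPosedFlow S)
    (D : Set X) (hD : Dense D)
    (hinst : ∀ φ ∈ D, LongTimeStrongInstability S φ) :
    IsMeagre {φ : X | supOrbitPos S φ < ⊤} ∧
    {φ : X | supOrbitPos S φ = ⊤} ∈ residual X ∧
    {φ : X | supOrbitPos S φ = ⊤}.Nonempty :=
  longtime_instability_dense_implies_generic_unbounded_orbits_general S hS D hD hinst

end
end

section
/- Let R ∈ {0} ∪ ℕ and let a be a solution on an interval I of the R-truncated system (respectively, of the FNLS system, or of the resonant system RFNLS). Then the mass Σ_{n∈ℤ²} |a_n(t)|² is finite and constant on I. -/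
open scoped BigOperators ENNReal NNReal
open Complex

noncomputable section

/-!
Write the equation as `a_n' = i (-|a_n|² a_n + S_n)`. The self-interaction term only rotates the
phase of `a_n`, so `d/dt |a_n|² = -2 Im (conj a_n · S_n)`. Summed over `n`, this is `-2 Im` of the
quartic form `Σ conj a_n · a_{n₁} · conj a_{n₂} · a_{n₃} · K(n₁, n₂, n₃, n)`. For each of the three
systems the kernel `K = 1_Γ e^{i ω₄ t}` satisfies `K(n₂, n₁, n, n₃) = conj K(n₁, n₂, n₃, n)`, so the
substitution `(n, n₁, n₂, n₃) ↦ (n₃, n₂, n₁, n)` maps the quartic form to its conjugate: it is real,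
and the derivative of the mass vanishes. The locally uniform `ℓ¹` bound makes every sum absolutely
convergent and lets one integrate the termwise derivatives, exchanging sum and integral by dominated
convergence.
-/

open ComplexConjugate MeasureTheory Set Interval

section SeriesFTC

variable {s t : ℝ}

theorem ae_mem_uIoc_of_forall_mem_Ioo (hst : s ≤ t) {P : ℝ → Prop} (hP : ∀ τ ∈ Ioo s t, P τ) :
    ∀ᵐ τ, τ ∈ Ι s t → P τ := by
  rw [← ae_restrict_iff' measurableSet_uIoc, uIoc_of_le hst,
    ← Measure.restrict_congr_set Ioo_ae_eq_Ioc]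
  exact ae_restrict_of_forall_mem measurableSet_Ioo hP

theorem intervalIntegrable_of_abs_le (hst : s ≤ t) {f : ℝ → ℝ} {C : ℝ}
    (hf : AEStronglyMeasurable f (volume.restrict (Ioo s t))) (hC : ∀ τ ∈ Ioo s t, |f τ| ≤ C) :
    IntervalIntegrable f volume s t :=
  (intervalIntegrable_iff_integrableOn_Ioo_of_le hst).2 <|
    IntegrableOn.of_bound measure_Ioo_lt_top hf C (ae_restrict_of_forall_mem measurableSet_Ioo hC)

theorem aestronglyMeasurable_of_hasDerivAt {g g' : ℝ → ℝ}
    (hg' : ∀ τ ∈ Ioo s t, HasDerivAt g (g' τ) τ) :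
    AEStronglyMeasurable g' (volume.restrict (Ioo s t)) :=
  (measurable_deriv g).aestronglyMeasurable.congr <|
    ae_restrict_of_forall_mem measurableSet_Ioo fun τ hτ => (hg' τ hτ).deriv

theorem hasSum_sub_of_hasDerivAt {ι : Type*} [Countable ι] {g g' : ι → ℝ → ℝ} {C : ℝ}
    (hst : s ≤ t) (hg : ∀ n, ContinuousOn (g n) (Icc s t))
    (hg' : ∀ n, ∀ τ ∈ Ioo s t, HasDerivAt (g n) (g' n τ) τ)
    (hsum : ∀ τ ∈ Ioo s t, Summable fun n => |g' n τ|)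
    (hC : ∀ τ ∈ Ioo s t, ∑' n, |g' n τ| ≤ C) :
    HasSum (fun n => g n t - g n s) (∫ τ in s..t, ∑' n, g' n τ) := by
  have hmeas n := aestronglyMeasurable_of_hasDerivAt (hg' n)
  have hle n : ∀ τ ∈ Ioo s t, |g' n τ| ≤ C := fun τ hτ =>
    ((hsum τ hτ).le_tsum n fun _ _ => abs_nonneg _).trans (hC τ hτ)
  have hFTC n : ∫ τ in s..t, g' n τ = g n t - g n s :=
    intervalIntegral.integral_eq_sub_of_hasDerivAt_of_le hst (hg n) (hg' n)
      (intervalIntegrable_of_abs_le hst (hmeas n) (hle n))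
  simp only [← hFTC]
  have hbound : IntervalIntegrable (fun τ => ∑' n, |g' n τ|) volume s t := by
    refine intervalIntegrable_of_abs_le (C := C) hst ?_ fun τ hτ => ?_
    · exact (AEMeasurable.tsum fun n => (hmeas n).aemeasurable.abs).aestronglyMeasurable
    · rw [abs_of_nonneg (tsum_nonneg fun _ => abs_nonneg _)]
      exact hC τ hτ
  refine intervalIntegral.hasSum_integral_of_dominated_convergence (fun n τ => |g' n τ|) ?_
    (fun n => .of_forall fun τ _ => le_rfl) (ae_mem_uIoc_of_forall_mem_Ioo hst hsum) hbound
    (ae_mem_uIoc_of_forall_mem_Ioo hst fun τ hτ => (hsum τ hτ).of_abs.hasSum)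
  intro n
  rw [uIoc_of_le hst, ← Measure.restrict_congr_set Ioo_ae_eq_Ioc]
  exact hmeas n

end SeriesFTC

section NonnegSeries
variable {ι : Type*} {u : ι → ℝ} (hu : Summable u) (hu₀ : 0 ≤ u)
include hu hu₀

theorem summable_sq_of_nonneg : Summable fun n => u n ^ 2 :=
  (hu.mul_left (∑' m, u m)).of_nonneg_of_le (fun _ => sq_nonneg _) fun n => by
    rw [sq]
    exact mul_le_mul_of_nonneg_right (hu.le_tsum n fun m _ => hu₀ m) (hu₀ n)

theorem summable_mul_mul_of_nonneg :
    Summable fun p : ι × ι × ι => u p.1 * (u p.2.1 * u p.2.2) :=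
  hu.mul_of_nonneg (hu.mul_of_nonneg hu hu₀ hu₀) hu₀ fun _ => mul_nonneg (hu₀ _) (hu₀ _)

theorem tsum_mul_mul_of_nonneg :
    ∑' p : ι × ι × ι, u p.1 * (u p.2.1 * u p.2.2) = (∑' n, u n) ^ 3 := by
  have hnorm : Summable fun n => ‖u n‖ := by simpa [abs_of_nonneg (hu₀ _)] using hu
  have hnorm₂ : Summable fun p : ι × ι => ‖u p.1 * u p.2‖ := by
    simpa [abs_of_nonneg (hu₀ _)] using hu.mul_of_nonneg hu hu₀ hu₀
  rw [← tsum_mul_tsum_of_summable_norm hnorm hnorm₂,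
    ← tsum_mul_tsum_of_summable_norm hnorm hnorm]
  ring

end NonnegSeries

section CubicSystem

variable {ι : Type*} (K : ι → ι → ι → ι → ℂ) (c : ι → ℂ)

def cubicTerm (n : ι) (p : ι × ι × ι) : ℂ :=
  c p.1 * conj (c p.2.1) * c p.2.2 * K p.1 p.2.1 p.2.2 n

def cubicSum (n : ι) : ℂ := ∑' p, cubicTerm K c n p

def cubicRHS (n : ι) : ℂ := Complex.I * (-((‖c n‖ : ℂ) ^ 2) * c n + cubicSum K c n)

def quarticTerm (x : ι × ι × ι × ι) : ℂ := conj (c x.1) * cubicTerm K c x.1 x.2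

def quarticSwap : ι × ι × ι × ι ≃ ι × ι × ι × ι where
  toFun x := (x.2.2.2, x.2.2.1, x.2.1, x.1)
  invFun x := (x.2.2.2, x.2.2.1, x.2.1, x.1)
  left_inv _ := rfl
  right_inv _ := rfl

variable {K c}

theorem quarticTerm_quarticSwap
    (hK : ∀ n₁ n₂ n₃ n, K n₂ n₁ n n₃ = conj (K n₁ n₂ n₃ n)) (x : ι × ι × ι × ι) :
    quarticTerm K c (quarticSwap x) = conj (quarticTerm K c x) := by
  simp only [quarticTerm, cubicTerm, quarticSwap, Equiv.coe_fn_mk]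
  rw [hK]
  simp only [map_mul, Complex.conj_conj]
  ring

theorem tsum_im_quarticTerm_eq_zero
    (hK : ∀ n₁ n₂ n₃ n, K n₂ n₁ n n₃ = conj (K n₁ n₂ n₃ n)) :
    ∑' x, (quarticTerm K c x).im = 0 := by
  have h := (quarticSwap : ι × ι × ι × ι ≃ _).tsum_eq fun x => (quarticTerm K c x).im
  simp only [quarticTerm_quarticSwap hK, Complex.conj_im, tsum_neg] at h
  linarith

variable (hK₁ : ∀ n₁ n₂ n₃ n, ‖K n₁ n₂ n₃ n‖ ≤ 1)
include hK₁

theorem norm_cubicTerm_le (n : ι) (p : ι × ι × ι) :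
    ‖cubicTerm K c n p‖ ≤ ‖c p.1‖ * (‖c p.2.1‖ * ‖c p.2.2‖) := by
  rw [cubicTerm, norm_mul, norm_mul, norm_mul, Complex.norm_conj]
  calc _ ≤ ‖c p.1‖ * ‖c p.2.1‖ * ‖c p.2.2‖ * 1 := by gcongr; exact hK₁ ..
    _ = _ := by ring

variable (hc : Summable fun n => ‖c n‖)
include hc

theorem summable_quarticTerm : Summable (quarticTerm K c) := by
  refine .of_norm_bounded (hc.mul_of_nonneg (summable_mul_mul_of_nonneg hc fun _ => norm_nonneg _)
    (fun _ => norm_nonneg _) fun _ => by positivity) fun x => ?_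
  rw [quarticTerm, norm_mul, Complex.norm_conj]
  exact mul_le_mul_of_nonneg_left (norm_cubicTerm_le hK₁ _ _) (norm_nonneg _)

theorem norm_cubicSum_le (n : ι) : ‖cubicSum K c n‖ ≤ (∑' m, ‖c m‖) ^ 3 := by
  have hprod := summable_mul_mul_of_nonneg hc fun _ => norm_nonneg _
  have hterm := hprod.of_norm_bounded (norm_cubicTerm_le hK₁ n)
  calc ‖cubicSum K c n‖ ≤ ∑' p, ‖cubicTerm K c n p‖ := norm_tsum_le_tsum_norm hterm.norm
    _ ≤ ∑' p : ι × ι × ι, ‖c p.1‖ * (‖c p.2.1‖ * ‖c p.2.2‖) :=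
      hterm.norm.tsum_le_tsum (norm_cubicTerm_le hK₁ n) hprod
    _ = _ := tsum_mul_mul_of_nonneg hc fun _ => norm_nonneg _

theorem abs_im_conj_mul_cubicSum_le (n : ι) :
    |(conj (c n) * cubicSum K c n).im| ≤ (∑' m, ‖c m‖) ^ 3 * ‖c n‖ :=
  calc _ ≤ ‖conj (c n) * cubicSum K c n‖ := Complex.abs_im_le_norm _
    _ = ‖cubicSum K c n‖ * ‖c n‖ := by rw [norm_mul, Complex.norm_conj, mul_comm]
    _ ≤ _ := by gcongr; exact norm_cubicSum_le hK₁ hc n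

theorem summable_abs_im_conj_mul_cubicSum :
    Summable fun n => |(conj (c n) * cubicSum K c n).im| :=
  (hc.mul_left _).of_nonneg_of_le (fun _ => abs_nonneg _) (abs_im_conj_mul_cubicSum_le hK₁ hc)

theorem tsum_abs_im_conj_mul_cubicSum_le :
    ∑' n, |(conj (c n) * cubicSum K c n).im| ≤ (∑' m, ‖c m‖) ^ 4 :=
  calc _ ≤ ∑' n, (∑' m, ‖c m‖) ^ 3 * ‖c n‖ :=
        (summable_abs_im_conj_mul_cubicSum hK₁ hc).tsum_le_tsum
          (abs_im_conj_mul_cubicSum_le hK₁ hc) (hc.mul_left _)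
    _ = _ := by rw [tsum_mul_left]; ring

theorem tsum_im_conj_mul_cubicSum (hK : ∀ n₁ n₂ n₃ n, K n₂ n₁ n n₃ = conj (K n₁ n₂ n₃ n)) :
    ∑' n, (conj (c n) * cubicSum K c n).im = 0 := by
  have hq := summable_quarticTerm hK₁ hc
  have hrow (n : ι) : (conj (c n) * cubicSum K c n).im = ∑' p, (quarticTerm K c (n, p)).im := by
    rw [cubicSum, ← tsum_mul_left]
    exact Complex.im_tsum (hq.prod_factor n)
  rw [tsum_congr hrow, ← (Complex.hasSum_im hq.hasSum).summable.tsum_prod' fun n =>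
    (Complex.hasSum_im (hq.prod_factor n).hasSum).summable]
  exact tsum_im_quarticTerm_eq_zero hK

end CubicSystem

section MassConservation

variable {ι : Type*} {K : ℝ → ι → ι → ι → ι → ℂ} {a : ℝ → ι → ℂ}

theorem hasDerivWithinAt_norm_sq_of_cubicRHS {n : ι} {s : Set ℝ} {t : ℝ}
    (h : HasDerivWithinAt (fun τ => a τ n) (cubicRHS (K t) (a t) n) s t) :
    HasDerivWithinAt (fun τ => ‖a τ n‖ ^ 2) (-2 * (conj (a t n) * cubicSum (K t) (a t) n).im)
      s t := by
  have hgauge : conj (a t n) * a t n = (‖a t n‖ : ℂ) ^ 2 := Complex.conj_mul' _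
  refine h.norm_sq.congr_deriv ?_
  rw [Complex.inner, cubicRHS]
  have hexpand : Complex.I * (-(‖a t n‖ : ℂ) ^ 2 * a t n + cubicSum (K t) (a t) n) * conj (a t n)
      = Complex.I * -(‖a t n‖ : ℂ) ^ 4 + Complex.I * (conj (a t n) * cubicSum (K t) (a t) n) := by
    linear_combination (-(‖a t n‖ : ℂ) ^ 2 * Complex.I) * hgauge
  rw [hexpand, Complex.add_re, Complex.I_mul_re, Complex.I_mul_re, ← Complex.ofReal_pow,
    ← Complex.ofReal_neg, Complex.ofReal_im]
  ring

variable (hK₁ : ∀ t n₁ n₂ n₃ n, ‖K t n₁ n₂ n₃ n‖ ≤ 1)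
  (hK : ∀ t n₁ n₂ n₃ n, K t n₂ n₁ n n₃ = conj (K t n₁ n₂ n₃ n))
include hK₁ hK

theorem tsum_norm_sq_eq_of_cubicRHS [Countable ι] {I : Set ℝ} {s t C : ℝ} (hst : s ≤ t)
    (hI : Icc s t ⊆ I) (hsum : ∀ τ ∈ Icc s t, Summable fun n => ‖a τ n‖)
    (hC : ∀ τ ∈ Icc s t, ∑' n, ‖a τ n‖ ≤ C)
    (hderiv : ∀ n, ∀ τ ∈ I, HasDerivWithinAt (fun τ => a τ n) (cubicRHS (K τ) (a τ) n) I τ) :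
    ∑' n, ‖a s n‖ ^ 2 = ∑' n, ‖a t n‖ ^ 2 := by
  set g' : ι → ℝ → ℝ := fun n τ => -2 * (conj (a τ n) * cubicSum (K τ) (a τ) n).im
  have hsq τ (hτ : τ ∈ Icc s t) := summable_sq_of_nonneg (hsum τ hτ) fun n => norm_nonneg (a τ n)
  have hsum' τ (hτ : τ ∈ Icc s t) : Summable fun n => |g' n τ| := by
    simpa [g', abs_mul] using (summable_abs_im_conj_mul_cubicSum (hK₁ τ) (hsum τ hτ)).mul_left 2
  have hbound τ (hτ : τ ∈ Icc s t) : ∑' n, |g' n τ| ≤ 2 * C ^ 4 := by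
    simp only [g', abs_mul, abs_neg, abs_two, tsum_mul_left]
    gcongr
    exact (tsum_abs_im_conj_mul_cubicSum_le (hK₁ τ) (hsum τ hτ)).trans
      (pow_le_pow_left₀ (tsum_nonneg fun _ => norm_nonneg _) (hC τ hτ) 4)
  have hFTC := hasSum_sub_of_hasDerivAt (g := fun n τ => ‖a τ n‖ ^ 2) (g' := g') hst
    (fun n τ hτ => (((hderiv n τ (hI hτ)).continuousWithinAt.mono hI).norm).pow 2)
    (fun n τ hτ => (hasDerivWithinAt_norm_sq_of_cubicRHS
      (hderiv n τ (hI (Ioo_subset_Icc_self hτ)))).hasDerivAt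
        (Filter.mem_of_superset (Ioo_mem_nhds hτ.1 hτ.2) (Ioo_subset_Icc_self.trans hI)))
    (fun τ hτ => hsum' τ (Ioo_subset_Icc_self hτ)) (fun τ hτ => hbound τ (Ioo_subset_Icc_self hτ))
  have hzero : ∫ τ in s..t, ∑' n, g' n τ = 0 := by
    refine (intervalIntegral.integral_congr (g := 0) fun τ hτ => ?_).trans
      intervalIntegral.integral_zero
    rw [uIcc_of_le hst] at hτ
    simp only [g', tsum_mul_left, Pi.zero_apply]
    rw [tsum_im_conj_mul_cubicSum (hK₁ τ) (hsum τ hτ) (hK τ), mul_zero]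
  rw [hzero] at hFTC
  exact (sub_eq_zero.1 (((hsq t (right_mem_Icc.2 hst)).hasSum.sub
    (hsq s (left_mem_Icc.2 hst)).hasSum).unique hFTC)).symm

theorem mass_conserved_of_cubicRHS [Countable ι] {I : Set ℝ} (hI : I.OrdConnected)
    (hsum : ∀ t ∈ I, Summable fun n => ‖a t n‖)
    (hbd : ∀ t₁ ∈ I, ∀ t₂ ∈ I, ∃ C : ℝ, ∀ t ∈ Icc t₁ t₂ ∩ I, ∑' n, ‖a t n‖ ≤ C)
    (hderiv : ∀ n, ∀ t ∈ I, HasDerivWithinAt (fun τ => a τ n) (cubicRHS (K t) (a t) n) I t) :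
    (∀ t ∈ I, Summable fun n => ‖a t n‖ ^ 2) ∧
    (∀ t₁ ∈ I, ∀ t₂ ∈ I, ∑' n, ‖a t₁ n‖ ^ 2 = ∑' n, ‖a t₂ n‖ ^ 2) := by
  refine ⟨fun t ht => summable_sq_of_nonneg (hsum t ht) fun n => norm_nonneg _, ?_⟩
  have key s (hs : s ∈ I) t (ht : t ∈ I) (hst : s ≤ t) :
      ∑' n, ‖a s n‖ ^ 2 = ∑' n, ‖a t n‖ ^ 2 := by
    have hIcc := hI.out hs ht
    obtain ⟨C, hC⟩ := hbd s hs t ht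
    exact tsum_norm_sq_eq_of_cubicRHS hK₁ hK hst hIcc (fun τ hτ => hsum τ (hIcc hτ))
      (fun τ hτ => hC τ ⟨hτ, hIcc hτ⟩) hderiv
  intro t₁ h₁ t₂ h₂
  rcases le_total t₁ t₂ with h | h
  · exact key t₁ h₁ t₂ h₂ h
  · exact (key t₂ h₂ t₁ h₁ h).symm

end MassConservation

section PhaseKernel

def IsInteraction (n₁ n₂ n₃ n : Z2) : Prop := n₁ - n₂ + n₃ = n ∧ n₁ ≠ n ∧ n₃ ≠ n

theorem IsInteraction.swap {n₁ n₂ n₃ n : Z2} (h : IsInteraction n₁ n₂ n₃ n) :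
    IsInteraction n₂ n₁ n n₃ := by
  obtain ⟨hsum, h₁, h₃⟩ := h
  refine ⟨by rw [← hsum]; abel, fun h₂ => h₁ ?_, h₃.symm⟩
  rw [← hsum, h₂]
  abel

theorem omega4_swap (n₁ n₂ n₃ n : Z2) : omega4 n₂ n₁ n n₃ = -omega4 n₁ n₂ n₃ n := by
  unfold omega4
  ring

open Classical in
def phaseKernel (Γ : Z2 → Z2 → Z2 → Z2 → Prop) (t : ℝ) (n₁ n₂ n₃ n : Z2) : ℂ :=
  if Γ n₁ n₂ n₃ n then Complex.exp (Complex.I * (omega4 n₁ n₂ n₃ n : ℂ) * t) else 0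

variable {Γ : Z2 → Z2 → Z2 → Z2 → Prop} {t : ℝ} {n₁ n₂ n₃ n : Z2}

theorem phaseKernel_of_pos (h : Γ n₁ n₂ n₃ n) :
    phaseKernel Γ t n₁ n₂ n₃ n = Complex.exp (Complex.I * (omega4 n₁ n₂ n₃ n : ℂ) * t) :=
  if_pos h

theorem phaseKernel_of_neg (h : ¬Γ n₁ n₂ n₃ n) : phaseKernel Γ t n₁ n₂ n₃ n = 0 :=
  if_neg h

theorem norm_phaseKernel_le : ‖phaseKernel Γ t n₁ n₂ n₃ n‖ ≤ 1 := by
  by_cases h : Γ n₁ n₂ n₃ n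
  · rw [phaseKernel_of_pos h, Complex.norm_exp]
    simp
  · simp [phaseKernel_of_neg h]

theorem phaseKernel_swap (hΓ : ∀ n₁ n₂ n₃ n, Γ n₁ n₂ n₃ n → Γ n₂ n₁ n n₃) :
    phaseKernel Γ t n₂ n₁ n n₃ = conj (phaseKernel Γ t n₁ n₂ n₃ n) := by
  by_cases h : Γ n₁ n₂ n₃ n
  · rw [phaseKernel_of_pos (hΓ _ _ _ _ h), phaseKernel_of_pos h, ← Complex.exp_conj, omega4_swap]
    simp
  · have h' : ¬Γ n₂ n₁ n n₃ := fun h' => h (hΓ _ _ _ _ h')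
    rw [phaseKernel_of_neg h, phaseKernel_of_neg h', map_zero]

theorem mass_conserved_of_phaseKernel (hΓ : ∀ n₁ n₂ n₃ n, Γ n₁ n₂ n₃ n → Γ n₂ n₁ n n₃)
    {I : Set ℝ} (hI : I.OrdConnected) {a : ℝ → Z2 → ℂ}
    (hsum : ∀ t ∈ I, Summable fun n => ‖a t n‖)
    (hbd : ∀ t₁ ∈ I, ∀ t₂ ∈ I, ∃ C : ℝ, ∀ t ∈ Icc t₁ t₂ ∩ I, ∑' n, ‖a t n‖ ≤ C)
    (hderiv : ∀ n, ∀ t ∈ I,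
      HasDerivWithinAt (fun τ => a τ n) (cubicRHS (phaseKernel Γ t) (a t) n) I t) :
    (∀ t ∈ I, Summable fun n => ‖a t n‖ ^ 2) ∧
    (∀ t₁ ∈ I, ∀ t₂ ∈ I, ∑' n, ‖a t₁ n‖ ^ 2 = ∑' n, ‖a t₂ n‖ ^ 2) :=
  mass_conserved_of_cubicRHS (K := phaseKernel Γ) (fun _ _ _ _ _ => norm_phaseKernel_le)
    (fun _ _ _ _ _ => phaseKernel_swap hΓ) hI hsum hbd hderiv

end PhaseKernel

section Systems

variable (a : Z2 → ℂ) (n : Z2) (t : ℝ)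

theorem fnlsRHS_eq_cubicRHS : fnlsRHS a n t = cubicRHS (phaseKernel IsInteraction t) a n := by
  rw [fnlsRHS, cubicRHS, cubicSum]
  congr! 3 with p
  funext p
  by_cases h : p.1 - p.2.1 + p.2.2 = n ∧ p.1 ≠ n ∧ p.2.2 ≠ n
  · rw [if_pos h, cubicTerm, phaseKernel_of_pos h]
  · rw [if_neg h, cubicTerm, phaseKernel_of_neg h, mul_zero]

theorem truncRHS_eq_cubicRHS (R : ℕ) :
    truncRHS R a n t = cubicRHS (phaseKernel (fun n₁ n₂ n₃ n =>
      IsInteraction n₁ n₂ n₃ n ∧ |omega4 n₁ n₂ n₃ n| ≤ R) t) a n := by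
  rw [truncRHS, cubicRHS, cubicSum]
  congr! 3 with p
  funext p
  by_cases h : p.1 - p.2.1 + p.2.2 = n ∧ p.1 ≠ n ∧ p.2.2 ≠ n ∧ |omega4 p.1 p.2.1 p.2.2 n| ≤ R
  · rw [if_pos h, cubicTerm, phaseKernel_of_pos ⟨⟨h.1, h.2.1, h.2.2.1⟩, h.2.2.2⟩]
  · rw [if_neg h, cubicTerm, phaseKernel_of_neg fun h' => h ⟨h'.1.1, h'.1.2.1, h'.1.2.2, h'.2⟩,
      mul_zero]

theorem resRHS_eq_cubicRHS :
    resRHS a n = cubicRHS (phaseKernel (fun n₁ n₂ n₃ n =>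
      IsInteraction n₁ n₂ n₃ n ∧ omega4 n₁ n₂ n₃ n = 0) t) a n := by
  rw [resRHS, cubicRHS, cubicSum]
  congr! 3 with p
  funext p
  by_cases h : p.1 - p.2.1 + p.2.2 = n ∧ p.1 ≠ n ∧ p.2.2 ≠ n ∧ omega4 p.1 p.2.1 p.2.2 n = 0
  · rw [if_pos h, cubicTerm, phaseKernel_of_pos ⟨⟨h.1, h.2.1, h.2.2.1⟩, h.2.2.2⟩, h.2.2.2]
    simp
  · rw [if_neg h, cubicTerm, phaseKernel_of_neg fun h' => h ⟨h'.1.1, h'.1.2.1, h'.1.2.2, h'.2⟩,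
      mul_zero]

end Systems

/-- Conservation of mass: for any solution of the `R`-truncated
system, of FNLS, or of the resonant system RFNLS on an interval `I`, the mass
`Σ_n |a_n(t)|²` is finite and constant on `I`. -/
theorem mass_is_conserved
    (R : ℕ) (I : Set ℝ) (hI : I.OrdConnected) (a : ℝ → Z2 → ℂ)
    (h : IsTruncSolution R I a ∨ IsFNLSSolution I a ∨ IsRFNLSSolution I a) :
    (∀ t ∈ I, Summable fun n : Z2 => ‖a t n‖ ^ 2) ∧
    (∀ t1 ∈ I, ∀ t2 ∈ I, (∑' n : Z2, ‖a t1 n‖ ^ 2) = ∑' n : Z2, ‖a t2 n‖ ^ 2) := by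
  rcases h with ⟨hsum, hbd, hderiv⟩ | ⟨hsum, hbd, hderiv⟩ | ⟨hsum, hbd, hderiv⟩
  · refine mass_conserved_of_phaseKernel (fun _ _ _ _ hp => ⟨hp.1.swap, ?_⟩) hI hsum hbd
      fun n t ht => truncRHS_eq_cubicRHS (a t) n t R ▸ hderiv n t ht
    rw [omega4_swap, abs_neg]
    exact hp.2
  · exact mass_conserved_of_phaseKernel (fun _ _ _ _ hp => hp.swap) hI hsum hbd
      fun n t ht => fnlsRHS_eq_cubicRHS (a t) n t ▸ hderiv n t ht
  · refine mass_conserved_of_phaseKernel (fun _ _ _ _ hp => ⟨hp.1.swap, ?_⟩) hI hsum hbd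
      fun n t ht => resRHS_eq_cubicRHS (a t) n t ▸ hderiv n t ht
    rw [omega4_swap, hp.2, neg_zero]
end
end

section
/- Let S ⊆ ℤ² be closed under completing parallelograms, i.e. n1, n2, n3 ∈ S implies n1 − n2 + n3 ∈ S. If a is a solution of the FNLS system on an interval I containing 0 and a_n(0) = 0 for every n ∉ S, then a_n(t) = 0 for every n ∉ S and every t ∈ I. In particular, solutions whose initial data is supported on a sublattice N·ℤ² remain supported on N·ℤ² for all time. -/
open scoped BigOperators ENNReal NNReal
open Complex

noncomputable section

/-! The mass `F(s) = ∑_{n ∉ S} |a_n(s)|` outside `S` satisfies a linear differential inequality.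
If `n ∉ S` and `n1 - n2 + n3 = n`, closedness of `S` forces one of `n1, n2, n3` out of `S`, so
`∑_{n ∉ S} |a_n'| ≤ 4 M² F` whenever `M` bounds the `ℓ¹` norm of `a`. By the mean value
inequality, `F(s) ≤ 4 M² |s - s₀| sup F` on an interval issuing from a time `s₀` at which `F`
vanishes; iterating, `F` vanishes on every interval of length `1 / (8 M²)` starting at such a time,
and connectedness of `[0, t]` carries the vanishing from `0` to `t`. -/

open Set Filter Function

theorem Convex.sum_norm_image_sub_le_of_sum_norm_hasDerivWithin_le {ι E : Type*}
    [NormedAddCommGroup E] [NormedSpace ℝ E] {A : Finset ι} {f f' : ι → ℝ → E} {s : Set ℝ}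
    {x y C : ℝ} (hf : ∀ i ∈ A, ∀ z ∈ s, HasDerivWithinAt (f i) (f' i z) s z)
    (bound : ∀ z ∈ s, ∑ i ∈ A, ‖f' i z‖ ≤ C) (hs : Convex ℝ s) (xs : x ∈ s) (ys : y ∈ s) :
    ∑ i ∈ A, ‖f i y - f i x‖ ≤ C * ‖y - x‖ := by
  let L := (PiLp.continuousLinearEquiv 1 ℝ fun _ : A => E).symm
  have hL (v : ι → E) : ‖L fun i : A => v i‖ = ∑ i ∈ A, ‖v i‖ := by
    rw [PiLp.norm_eq_of_L1]
    exact Finset.sum_coe_sort A fun i => ‖v i‖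
  have hderiv (z) (hz : z ∈ s) :
      HasDerivWithinAt (fun z => L fun i : A => f i z) (L fun i : A => f' i z) s z :=
    L.hasFDerivAt.comp_hasDerivWithinAt z (hasDerivWithinAt_pi.2 fun i => hf i i.2 z hz)
  have key := hs.norm_image_sub_le_of_norm_hasDerivWithin_le hderiv
    (fun z hz => (hL (f' · z)).trans_le (bound z hz)) xs ys
  rw [← map_sub] at key
  exact (hL fun i => f i y - f i x).symm.trans_le key

theorem hasSum_mul_mul_prod {ι : Type*} {f g h : ι → ℝ} (hf : Summable f) (hg : Summable g)
    (hh : Summable h) :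
    HasSum (fun p : ι × ι × ι => f p.1 * g p.2.1 * h p.2.2)
      ((∑' i, f i) * (∑' i, g i) * (∑' i, h i)) := by
  have hgh := summable_mul_of_summable_norm hg.norm hh.norm
  have hfgh := summable_mul_of_summable_norm hf.norm hgh.norm
  simp_rw [mul_assoc, tsum_mul_tsum_of_summable_norm hg.norm hh.norm,
    tsum_mul_tsum_of_summable_norm hf.norm hgh.norm]
  exact hfgh.hasSum

theorem mul_mul_le_sum_indicator_compl {α : Type*} {f : α → ℝ} (hf : ∀ x, 0 ≤ f x) {s : Set α}
    {x y z : α} (h : x ∉ s ∨ y ∉ s ∨ z ∉ s) :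
    f x * f y * f z ≤ sᶜ.indicator f x * f y * f z + f x * sᶜ.indicator f y * f z +
      f x * f y * sᶜ.indicator f z := by
  have hi (w : α) : 0 ≤ sᶜ.indicator f w := indicator_nonneg (fun w _ => hf w) w
  have := mul_nonneg (mul_nonneg (hi x) (hf y)) (hf z)
  have := mul_nonneg (mul_nonneg (hf x) (hi y)) (hf z)
  have := mul_nonneg (mul_nonneg (hf x) (hf y)) (hi z)
  rcases h with h | h | h <;> rw [indicator_of_mem (mem_compl h)] <;> linarith

def fnlsTerm (b : Z2 → ℂ) (n : Z2) (t : ℝ) (p : Z2 × Z2 × Z2) : ℂ :=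
  if p.1 - p.2.1 + p.2.2 = n ∧ p.1 ≠ n ∧ p.2.2 ≠ n then
    b p.1 * (starRingEnd ℂ) (b p.2.1) * b p.2.2 *
      Complex.exp (Complex.I * ((omega4 p.1 p.2.1 p.2.2 n : ℤ) : ℂ) * (t : ℂ))
  else 0

theorem norm_fnlsTerm_le (b : Z2 → ℂ) (n : Z2) (t : ℝ) (p : Z2 × Z2 × Z2) :
    ‖fnlsTerm b n t p‖ ≤
      if p.1 - p.2.1 + p.2.2 = n then ‖b p.1‖ * ‖b p.2.1‖ * ‖b p.2.2‖ else 0 := by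
  unfold fnlsTerm
  split_ifs with h h'
  · rw [norm_mul, norm_mul, norm_mul, RCLike.norm_conj, Complex.norm_exp]
    simp
  · exact absurd h.1 h'
  · rw [norm_zero]; positivity
  · simp

theorem norm_fnlsRHS_le (b : Z2 → ℂ) (n : Z2) (t : ℝ)
    (h : Summable fun p => ‖fnlsTerm b n t p‖) :
    ‖fnlsRHS b n t‖ ≤ ‖b n‖ ^ 2 * ‖b n‖ + ∑' p, ‖fnlsTerm b n t p‖ := by
  change ‖Complex.I * (-((‖b n‖ : ℂ) ^ 2) * b n + ∑' p, fnlsTerm b n t p)‖ ≤ _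
  rw [norm_mul, Complex.norm_I, one_mul]
  refine (norm_add_le _ _).trans (add_le_add (le_of_eq ?_) (norm_tsum_le_tsum_norm h))
  simp

def massOutside (S : Set Z2) (b : Z2 → ℂ) : ℝ :=
  ∑' n, Sᶜ.indicator (fun m => ‖b m‖) n

section massOutside

variable {S : Set Z2} {b : Z2 → ℂ}

theorem massOutside_nonneg : 0 ≤ massOutside S b :=
  tsum_nonneg fun n => indicator_nonneg (fun m _ => norm_nonneg (b m)) n

theorem massOutside_le_tsum (hb : Summable fun n => ‖b n‖) :
    massOutside S b ≤ ∑' n, ‖b n‖ :=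
  (hb.indicator _).tsum_le_tsum (indicator_le_self' fun m _ => norm_nonneg (b m)) hb

theorem sum_norm_le_massOutside (hb : Summable fun n => ‖b n‖) {A : Finset Z2}
    (hA : ∀ n ∈ A, n ∉ S) : ∑ n ∈ A, ‖b n‖ ≤ massOutside S b := by
  calc ∑ n ∈ A, ‖b n‖ = ∑ n ∈ A, Sᶜ.indicator (fun m => ‖b m‖) n :=
        Finset.sum_congr rfl fun n hn =>
          (indicator_of_mem (mem_compl (hA n hn)) (fun m => ‖b m‖)).symm
    _ ≤ massOutside S b :=
        (hb.indicator _).sum_le_tsum A fun n _ => indicator_nonneg (fun m _ => norm_nonneg _) n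

end massOutside

theorem sum_norm_fnlsRHS_le {S : Set Z2}
    (hS : ∀ n1 n2 n3 : Z2, n1 ∈ S → n2 ∈ S → n3 ∈ S → n1 - n2 + n3 ∈ S) {b : Z2 → ℂ}
    (hb : Summable fun n => ‖b n‖) {M : ℝ} (hM : ∑' n, ‖b n‖ ≤ M) (t : ℝ) {A : Finset Z2}
    (hA : ∀ n ∈ A, n ∉ S) :
    ∑ n ∈ A, ‖fnlsRHS b n t‖ ≤ 4 * M ^ 2 * massOutside S b := by
  classical
  set f : Z2 → ℝ := fun n => ‖b n‖
  set g := Sᶜ.indicator f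
  have hf0 (n : Z2) : 0 ≤ f n := norm_nonneg _
  have hg0 (n : Z2) : 0 ≤ g n := indicator_nonneg (fun n _ => hf0 n) n
  set ψ : Z2 × Z2 × Z2 → ℝ := fun p => g p.1 * f p.2.1 * f p.2.2 + f p.1 * g p.2.1 * f p.2.2 +
    f p.1 * f p.2.1 * g p.2.2
  have hψ0 (p) : 0 ≤ ψ p := by
    have := hf0 p.1; have := hf0 p.2.1; have := hf0 p.2.2
    have := hg0 p.1; have := hg0 p.2.1; have := hg0 p.2.2
    positivity
  have hψ : HasSum ψ (3 * (∑' n, f n) ^ 2 * massOutside S b) := by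
    have hg := hb.indicator Sᶜ
    convert ((hasSum_mul_mul_prod hg hb hb).add (hasSum_mul_mul_prod hb hg hb)).add
      (hasSum_mul_mul_prod hb hb hg) using 1
    unfold massOutside; ring
  -- every interaction landing outside `S` has a vertex outside `S`, by closedness of `S`
  have hterm (n) (hn : n ∉ S) (p) :
      ‖fnlsTerm b n t p‖ ≤ if p.1 - p.2.1 + p.2.2 = n then ψ p else 0 := by
    refine (norm_fnlsTerm_le b n t p).trans ?_
    split_ifs with hp
    · refine mul_mul_le_sum_indicator_compl hf0 ?_
      by_contra! hmem
      exact hn (hp ▸ hS _ _ _ hmem.1 hmem.2.1 hmem.2.2)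
    · rfl
  have hite (P : Prop) [Decidable P] (p) : (if P then ψ p else 0) ≤ ψ p := by
    split_ifs; exacts [le_rfl, hψ0 p]
  have hsummable (n) (hn : n ∈ A) : Summable fun p => ‖fnlsTerm b n t p‖ :=
    hψ.summable.of_nonneg_of_le (fun p => norm_nonneg _) fun p =>
      (hterm n (hA n hn) p).trans (hite _ p)
  have hcubic : ∑ n ∈ A, ‖b n‖ ^ 2 * ‖b n‖ ≤ M ^ 2 * massOutside S b := by
    have hfM (n : Z2) : f n ≤ M := (hb.le_tsum n fun m _ => hf0 m).trans hM
    calc ∑ n ∈ A, ‖b n‖ ^ 2 * ‖b n‖ ≤ ∑ n ∈ A, M ^ 2 * ‖b n‖ :=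
          Finset.sum_le_sum fun n _ => by gcongr; exact hfM n
      _ ≤ M ^ 2 * massOutside S b := by
          rw [← Finset.mul_sum]; gcongr; exact sum_norm_le_massOutside hb hA
  have hinteraction : ∑ n ∈ A, ∑' p, ‖fnlsTerm b n t p‖ ≤ 3 * M ^ 2 * massOutside S b := by
    rw [← Summable.tsum_finsetSum hsummable]
    calc ∑' p, ∑ n ∈ A, ‖fnlsTerm b n t p‖ ≤ ∑' p, ψ p := by
          refine Summable.tsum_le_tsum (fun p => ?_) (summable_sum hsummable) hψ.summable
          calc ∑ n ∈ A, ‖fnlsTerm b n t p‖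
              ≤ ∑ n ∈ A, if p.1 - p.2.1 + p.2.2 = n then ψ p else 0 :=
                Finset.sum_le_sum fun n hn => hterm n (hA n hn) p
            _ ≤ ψ p := by rw [Finset.sum_ite_eq]; exact hite _ p
      _ = 3 * (∑' n, f n) ^ 2 * massOutside S b := hψ.tsum_eq
      _ ≤ 3 * M ^ 2 * massOutside S b := by gcongr; exact massOutside_nonneg
  calc ∑ n ∈ A, ‖fnlsRHS b n t‖
      ≤ ∑ n ∈ A, (‖b n‖ ^ 2 * ‖b n‖ + ∑' p, ‖fnlsTerm b n t p‖) :=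
        Finset.sum_le_sum fun n hn => norm_fnlsRHS_le b n t (hsummable n hn)
    _ ≤ 4 * M ^ 2 * massOutside S b := by
        rw [Finset.sum_add_distrib]; linarith

section Dynamics

variable {S : Set Z2} {J : Set ℝ} {a : ℝ → Z2 → ℂ} {M : ℝ}

theorem massOutside_le_of_support_subset
    (hS : ∀ n1 n2 n3 : Z2, n1 ∈ S → n2 ∈ S → n3 ∈ S → n1 - n2 + n3 ∈ S) (hJ : J.OrdConnected)
    (hderiv : ∀ n, ∀ σ ∈ J, HasDerivWithinAt (fun τ => a τ n) (fnlsRHS (a σ) n σ) J σ)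
    (hsum : ∀ σ ∈ J, Summable fun n => ‖a σ n‖) (hM : ∀ σ ∈ J, ∑' n, ‖a σ n‖ ≤ M) {C : ℝ}
    (hC : ∀ σ ∈ J, massOutside S (a σ) ≤ C) {s₀ s : ℝ} (hs₀ : s₀ ∈ J) (hs : s ∈ J)
    (h₀ : support (a s₀) ⊆ S) :
    massOutside S (a s) ≤ 4 * M ^ 2 * C * |s - s₀| := by
  classical
  have hC0 : 0 ≤ C := massOutside_nonneg.trans (hC s₀ hs₀)
  refine tsum_le_of_sum_le' (by positivity) fun B => ?_
  rw [Finset.sum_indicator_eq_sum_filter]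
  calc ∑ n ∈ B with n ∈ Sᶜ, ‖a s n‖ = ∑ n ∈ B with n ∈ Sᶜ, ‖a s n - a s₀ n‖ :=
        Finset.sum_congr rfl fun n hn => by
          rw [support_subset_iff'.1 h₀ n (Finset.mem_filter.1 hn).2, sub_zero]
    _ ≤ 4 * M ^ 2 * C * ‖s - s₀‖ :=
        hJ.convex.sum_norm_image_sub_le_of_sum_norm_hasDerivWithin_le
          (f := fun n τ => a τ n) (fun n _ σ hσ => hderiv n σ hσ)
          (fun σ hσ => (sum_norm_fnlsRHS_le hS (hsum σ hσ) (hM σ hσ) σ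
            fun n hn => (Finset.mem_filter.1 hn).2).trans (by gcongr; exact hC σ hσ)) hs₀ hs

theorem support_subset_of_abs_sub_le
    (hS : ∀ n1 n2 n3 : Z2, n1 ∈ S → n2 ∈ S → n3 ∈ S → n1 - n2 + n3 ∈ S) (hJ : J.OrdConnected)
    (hderiv : ∀ n, ∀ σ ∈ J, HasDerivWithinAt (fun τ => a τ n) (fnlsRHS (a σ) n σ) J σ)
    (hsum : ∀ σ ∈ J, Summable fun n => ‖a σ n‖) (hM : ∀ σ ∈ J, ∑' n, ‖a σ n‖ ≤ M)
    {s₀ s : ℝ} (hs₀ : s₀ ∈ J) (hs : s ∈ J) (hclose : 8 * M ^ 2 * |s - s₀| ≤ 1)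
    (h₀ : support (a s₀) ⊆ S) :
    support (a s) ⊆ S := by
  have hsub : uIcc s₀ s ⊆ J := hJ.uIcc_subset hs₀ hs
  have hM0 : 0 ≤ M := (tsum_nonneg fun n => norm_nonneg _).trans (hM s₀ hs₀)
  -- each use of `massOutside_le_of_support_subset` halves the bound, as `4 M² |σ - s₀| ≤ 1 / 2`
  have halve (k : ℕ) : ∀ σ ∈ uIcc s₀ s, massOutside S (a σ) ≤ M * (1 / 2) ^ k := by
    induction k with
    | zero =>
      intro σ hσ
      simpa using (massOutside_le_tsum (hsum σ (hsub hσ))).trans (hM σ (hsub hσ))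
    | succ k ih =>
      intro σ hσ
      have hσs₀ : |σ - s₀| ≤ |s - s₀| := abs_sub_left_of_mem_uIcc hσ
      calc massOutside S (a σ) ≤ 4 * M ^ 2 * (M * (1 / 2) ^ k) * |σ - s₀| :=
            massOutside_le_of_support_subset hS ordConnected_uIcc
              (fun n τ hτ => (hderiv n τ (hsub hτ)).mono hsub) (fun τ hτ => hsum τ (hsub hτ))
              (fun τ hτ => hM τ (hsub hτ)) ih left_mem_uIcc hσ h₀
        _ = (4 * M ^ 2 * |σ - s₀|) * (M * (1 / 2) ^ k) := by ring
        _ ≤ 1 / 2 * (M * (1 / 2) ^ k) := by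
            gcongr; linarith [mul_le_mul_of_nonneg_left hσs₀ (sq_nonneg M)]
        _ = M * (1 / 2) ^ (k + 1) := by ring
  have hlim : Tendsto (fun k : ℕ => M * (1 / 2 : ℝ) ^ k) atTop (nhds 0) := by
    simpa using (tendsto_pow_atTop_nhds_zero_of_lt_one (r := (1 / 2 : ℝ)) (by norm_num)
      (by norm_num)).const_mul M
  have hzero : massOutside S (a s) ≤ 0 := ge_of_tendsto' hlim fun k => halve k s right_mem_uIcc
  refine support_subset_iff'.2 fun n hn => norm_le_zero_iff.1 ?_
  simpa using (sum_norm_le_massOutside (hsum s hs) (A := {n}) (by simpa using hn)).trans hzero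

end Dynamics

/-- If `S ⊆ ℤ²` is closed under `(n1,n2,n3) ↦ n1 − n2 + n3` and `a`
is a solution of FNLS on an interval `I ∋ 0` with initial data supported in `S`, then
`a(t)` is supported in `S` for all `t ∈ I`. -/
theorem fnls_support_preserved
    (S : Set Z2) (hS : ∀ n1 n2 n3 : Z2, n1 ∈ S → n2 ∈ S → n3 ∈ S → n1 - n2 + n3 ∈ S)
    (I : Set ℝ) (hI : I.OrdConnected) (h0I : (0 : ℝ) ∈ I)
    (a : ℝ → Z2 → ℂ) (ha : IsFNLSSolution I a)
    (hinit : ∀ n : Z2, n ∉ S → a 0 n = 0) :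
    ∀ t ∈ I, ∀ n : Z2, n ∉ S → a t n = 0 := by
  obtain ⟨hsum, hbdd, hderiv⟩ := ha
  intro t ht
  rw [← support_subset_iff']
  have hK : uIcc 0 t ⊆ I := hI.uIcc_subset h0I ht
  obtain ⟨C, hC⟩ := hbdd _ (min_rec' (· ∈ I) h0I ht) _ (max_rec' (· ∈ I) h0I ht)
  set M := max C 1
  have hM0 : 0 < M := lt_max_of_lt_right one_pos
  have hstep : ∀ x ∈ uIcc 0 t, ∀ y ∈ uIcc 0 t, 8 * M ^ 2 * |y - x| ≤ 1 →
      support (a x) ⊆ S → support (a y) ⊆ S := fun x hx y hy =>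
    support_subset_of_abs_sub_le hS ordConnected_uIcc (fun n σ hσ => (hderiv n σ (hK hσ)).mono hK)
      (fun σ hσ => hsum σ (hK hσ)) (fun σ hσ => (hC σ ⟨hσ, hK hσ⟩).trans (le_max_left _ _)) hx hy
  refine isPreconnected_uIcc.induction₂' (fun x y => support (a x) ⊆ S → support (a y) ⊆ S)
    (fun x hx => ?_) (fun _ _ _ _ _ _ hxy hyz => hyz ∘ hxy) left_mem_uIcc right_mem_uIcc
    (support_subset_iff'.2 hinit)
  filter_upwards [self_mem_nhdsWithin, mem_nhdsWithin_of_mem_nhds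
    (Metric.closedBall_mem_nhds x (by positivity : (0 : ℝ) < 1 / (8 * M ^ 2)))] with y hy hxy
  have hclose : 8 * M ^ 2 * |y - x| ≤ 1 := by
    rw [Metric.mem_closedBall, Real.dist_eq, le_div_iff₀ (by positivity)] at hxy; linarith
  exact ⟨hstep x hx y hy hclose, hstep y hy x hx (by rwa [abs_sub_comm])⟩
end
end

section
/- Let R ∈ {0} ∪ ℕ and let S ⊆ ℤ² satisfy the R-closure condition. If a is a solution of the R-truncated system on an interval I containing 0 and a_n(0) = 0 for every n ∉ S, then a_n(t) = 0 for every n ∉ S and every t ∈ I. -/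
open scoped BigOperators ENNReal NNReal
open Complex

noncomputable section

/-!
Let `F τ` be the `ℓ¹` norm of `a τ` off `S`. In the equation for a mode `n ∉ S`, every
interaction `a_{n₁} conj(a_{n₂}) a_{n₃}` has some `nᵢ ∉ S`, by the `R`-closure of `S`; summing
over `n ∉ S` gives `∑_{n ∉ S} |a_n'| ≤ 4 ‖a‖₁² F`. If `F s = 0`, the mean value inequality yields
`F u ≤ 4 C² |u - s| sup_{[s, u]} F`, which forces `F = 0` near `s`. Hence `{F = 0}` is open and
closed in `[0, t]`, and it contains `0`.
-/

section Bootstrap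

variable {F : ℝ → ℝ} {J : Set ℝ} {K : ℝ}

theorem eq_zero_of_growth_bound_of_abs_sub_le (hJ : J.OrdConnected) (hK : 0 ≤ K)
    (hF0 : ∀ τ ∈ J, 0 ≤ F τ) (hFbdd : BddAbove (F '' J))
    (hgrowth : ∀ s ∈ J, ∀ u ∈ J, F s = 0 → ∀ β : ℝ, (∀ τ ∈ Set.uIcc s u, F τ ≤ β) →
      F u ≤ K * |u - s| * β)
    {s u : ℝ} (hs : s ∈ J) (hu : u ∈ J) (hFs : F s = 0) (hsu : |u - s| ≤ (2 * K + 1)⁻¹) :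
    F u = 0 := by
  have hsub : Set.uIcc s u ⊆ J := hJ.uIcc_subset hs hu
  set M := sSup (F '' Set.uIcc s u)
  have hM : ∀ τ ∈ Set.uIcc s u, F τ ≤ M := fun τ hτ =>
    le_csSup (hFbdd.mono (Set.image_mono hsub)) (Set.mem_image_of_mem F hτ)
  have hM0 : 0 ≤ M := hFs ▸ hM s Set.left_mem_uIcc
  have hKδ : K * (2 * K + 1)⁻¹ ≤ 1 / 2 := by
    rw [← div_eq_mul_inv, div_le_iff₀ (by linarith)]; linarith
  have hMhalf : M ≤ M / 2 := by
    refine csSup_le (Set.image_nonempty.mpr Set.nonempty_uIcc) ?_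
    rintro _ ⟨τ, hτ, rfl⟩
    have hτs : |τ - s| ≤ (2 * K + 1)⁻¹ := (Set.abs_sub_left_of_mem_uIcc hτ).trans hsu
    calc F τ ≤ K * |τ - s| * M := hgrowth s hs τ (hsub hτ) hFs M fun σ hσ =>
            hM σ (Set.uIcc_subset_uIcc Set.left_mem_uIcc hτ hσ)
      _ ≤ K * (2 * K + 1)⁻¹ * M := by gcongr
      _ ≤ 1 / 2 * M := by gcongr
      _ = M / 2 := by ring
  exact le_antisymm ((hM u Set.right_mem_uIcc).trans (by linarith)) (hF0 u hu)

theorem Set.OrdConnected.eqOn_zero_of_growth_bound (hJ : J.OrdConnected) (hK : 0 ≤ K)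
    (hF0 : ∀ τ ∈ J, 0 ≤ F τ) (hFbdd : BddAbove (F '' J))
    (hgrowth : ∀ s ∈ J, ∀ u ∈ J, F s = 0 → ∀ β : ℝ, (∀ τ ∈ Set.uIcc s u, F τ ≤ β) →
      F u ≤ K * |u - s| * β)
    {s : ℝ} (hs : s ∈ J) (hFs : F s = 0) : Set.EqOn F 0 J := by
  intro u hu
  have hlocal : ∀ x ∈ J, ∀ᶠ y in nhdsWithin x J, (F x = 0 ↔ F y = 0) := by
    intro x hx
    have hδ : (0 : ℝ) < (2 * K + 1)⁻¹ := by positivity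
    filter_upwards [self_mem_nhdsWithin,
      mem_nhdsWithin_of_mem_nhds (Metric.closedBall_mem_nhds x hδ)] with y hy hxy
    rw [Metric.mem_closedBall, Real.dist_eq] at hxy
    exact ⟨fun h => eq_zero_of_growth_bound_of_abs_sub_le hJ hK hF0 hFbdd hgrowth hx hy h hxy,
      fun h => eq_zero_of_growth_bound_of_abs_sub_le hJ hK hF0 hFbdd hgrowth hy hx h
        (abs_sub_comm x y ▸ hxy)⟩
  exact (hJ.isPreconnected.induction₂ (fun x y => F x = 0 ↔ F y = 0) hlocal
    (fun _ _ _ _ _ _ => Iff.trans) (fun _ _ _ _ => Iff.symm) hs hu).mp hFs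

end Bootstrap

theorem Convex.sum_norm_sub_le_of_hasDerivWithinAt {ι E : Type*} [NormedAddCommGroup E]
    [NormedSpace ℝ E] {f f' : ℝ → ι → E} {D : Set ℝ} (hD : Convex ℝ D) (s : Finset ι)
    (hf : ∀ i ∈ s, ∀ τ ∈ D, HasDerivWithinAt (f · i) (f' τ i) D τ) {C : ℝ}
    (hC : ∀ τ ∈ D, ∑ i ∈ s, ‖f' τ i‖ ≤ C) {x y : ℝ} (hx : x ∈ D) (hy : y ∈ D) :
    ∑ i ∈ s, ‖f y i - f x i‖ ≤ C * ‖y - x‖ := by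
  let Φ : ℝ → PiLp 1 (fun _ : s => E) := fun τ => WithLp.toLp 1 fun i => f τ i
  have hΦ : ∀ τ ∈ D, HasDerivWithinAt Φ (WithLp.toLp 1 fun i => f' τ i) D τ := fun τ hτ =>
    (PiLp.hasFDerivAt_toLp (𝕜 := ℝ) 1 _).comp_hasDerivWithinAt τ
      (hasDerivWithinAt_pi.mpr fun i : s => hf i i.2 τ hτ)
  have hnorm : ∀ g : ι → E, ‖(WithLp.toLp 1 fun i : s => g i : PiLp 1 (fun _ : s => E))‖ =
      ∑ i ∈ s, ‖g i‖ := fun g => by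
    rw [PiLp.norm_eq_of_L1, Finset.sum_coe_sort s fun i => ‖g i‖]
  exact (hnorm (f y - f x)).symm.trans_le <| hD.norm_image_sub_le_of_norm_hasDerivWithin_le hΦ
    (fun τ hτ => (hnorm (f' τ)).trans_le (hC τ hτ)) hx hy

section NormOutside

variable {ι E : Type*} [NormedAddCommGroup E] {S : Set ι} {x : ι → E}

def normOutside (S : Set ι) (x : ι → E) : ℝ := ∑' m, Sᶜ.indicator (fun m => ‖x m‖) m

theorem normOutside_nonneg : 0 ≤ normOutside S x :=
  tsum_nonneg <| Set.indicator_nonneg fun _ _ => norm_nonneg _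

theorem summable_indicator_norm (hx : Summable (‖x ·‖)) :
    Summable (Sᶜ.indicator (‖x ·‖)) :=
  hx.of_nonneg_of_le (Set.indicator_nonneg fun _ _ => norm_nonneg _)
    (Set.indicator_le_self' fun _ _ => norm_nonneg _)

theorem normOutside_le_tsum_norm (hx : Summable (‖x ·‖)) : normOutside S x ≤ ∑' m, ‖x m‖ :=
  (summable_indicator_norm hx).tsum_le_tsum (Set.indicator_le_self' fun _ _ => norm_nonneg _) hx

theorem sum_norm_le_normOutside (hx : Summable (‖x ·‖)) {s : Finset ι} (hs : ∀ m ∈ s, m ∉ S) :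
    ∑ m ∈ s, ‖x m‖ ≤ normOutside S x := by
  calc ∑ m ∈ s, ‖x m‖ = ∑ m ∈ s, Sᶜ.indicator (‖x ·‖) m :=
        Finset.sum_congr rfl fun m hm => (Set.indicator_of_mem (hs m hm) (‖x ·‖)).symm
    _ ≤ normOutside S x := (summable_indicator_norm hx).sum_le_tsum s fun _ _ =>
        Set.indicator_nonneg (fun _ _ => norm_nonneg _) _

theorem normOutside_le_of_forall_sum_le {c : ℝ} (hc : 0 ≤ c)
    (h : ∀ s : Finset ι, (∀ m ∈ s, m ∉ S) → ∑ m ∈ s, ‖x m‖ ≤ c) : normOutside S x ≤ c := by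
  classical
  refine tsum_le_of_sum_le' hc fun s => ?_
  rw [Finset.sum_indicator_eq_sum_filter]
  exact h _ fun m hm => (Finset.mem_filter.mp hm).2

theorem normOutside_eq_zero_iff (hx : Summable (‖x ·‖)) :
    normOutside S x = 0 ↔ ∀ m ∉ S, x m = 0 := by
  refine ⟨fun h m hm => norm_le_zero_iff.mp ?_, fun h => ?_⟩
  · simpa [h] using sum_norm_le_normOutside (S := S) hx (s := {m}) (by simpa using hm)
  · refine le_antisymm (normOutside_le_of_forall_sum_le le_rfl fun s hs => ?_) normOutside_nonneg
    exact (Finset.sum_eq_zero fun m hm => by rw [h m (hs m hm), norm_zero]).le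

end NormOutside

theorem hasSum_mul_mul_of_nonneg {ι : Type*} {u v w : ι → ℝ} (hu : Summable u) (hv : Summable v)
    (hw : Summable w) (hu0 : 0 ≤ u) (hv0 : 0 ≤ v) (hw0 : 0 ≤ w) :
    HasSum (fun p : ι × ι × ι => u p.1 * v p.2.1 * w p.2.2)
      ((∑' i, u i) * (∑' i, v i) * (∑' i, w i)) := by
  have hvw := hv.mul_of_nonneg hw hv0 hw0
  have huvw := hu.mul_of_nonneg hvw hu0 fun q => mul_nonneg (hv0 q.1) (hw0 q.2)
  simpa only [mul_assoc] using hu.hasSum.mul (hv.hasSum.mul hw.hasSum hvw) huvw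

theorem sum_tsum_ite_eq_le_tsum {α β : Type*} [DecidableEq β] {B : α → ℝ} (hB0 : 0 ≤ B)
    (hB : Summable B) (φ : α → β) (s : Finset β) :
    ∑ n ∈ s, ∑' p, (if φ p = n then B p else 0) ≤ ∑' p, B p := by
  have hfiber : ∀ n, Summable fun p => if φ p = n then B p else 0 := fun n =>
    hB.of_nonneg_of_le (fun p => by split_ifs; exacts [hB0 p, le_rfl]) fun p => by
      split_ifs; exacts [le_rfl, hB0 p]
  rw [← Summable.tsum_finsetSum fun n _ => hfiber n]
  refine Summable.tsum_le_tsum (fun p => ?_) (summable_sum fun n _ => hfiber n) hB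
  rw [Finset.sum_ite_eq]
  split_ifs; exacts [le_rfl, hB0 p]

section OutsideWeight

variable {ι : Type*} (S : Set ι) (g : ι → ℝ)

def outsideWeight (p : ι × ι × ι) : ℝ :=
  Sᶜ.indicator g p.1 * g p.2.1 * g p.2.2 + g p.1 * Sᶜ.indicator g p.2.1 * g p.2.2 +
    g p.1 * g p.2.1 * Sᶜ.indicator g p.2.2

variable {S g}

theorem outsideWeight_nonneg (hg0 : 0 ≤ g) : 0 ≤ outsideWeight S g := fun p => by
  have hf0 : 0 ≤ Sᶜ.indicator g := Set.indicator_nonneg fun i _ => hg0 i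
  have h1 := mul_nonneg (mul_nonneg (hf0 p.1) (hg0 p.2.1)) (hg0 p.2.2)
  have h2 := mul_nonneg (mul_nonneg (hg0 p.1) (hf0 p.2.1)) (hg0 p.2.2)
  have h3 := mul_nonneg (mul_nonneg (hg0 p.1) (hg0 p.2.1)) (hf0 p.2.2)
  exact add_nonneg (add_nonneg h1 h2) h3

theorem hasSum_outsideWeight (hg0 : 0 ≤ g) (hg : Summable g) :
    HasSum (outsideWeight S g) (3 * (∑' i, g i) ^ 2 * ∑' i, Sᶜ.indicator g i) := by
  have hf0 : 0 ≤ Sᶜ.indicator g := Set.indicator_nonneg fun i _ => hg0 i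
  have hf : Summable (Sᶜ.indicator g) :=
    hg.of_nonneg_of_le hf0 (Set.indicator_le_self' fun i _ => hg0 i)
  convert ((hasSum_mul_mul_of_nonneg hf hg hg hf0 hg0 hg0).add
    (hasSum_mul_mul_of_nonneg hg hf hg hg0 hf0 hg0)).add
    (hasSum_mul_mul_of_nonneg hg hg hf hg0 hg0 hf0) using 1
  · rfl
  · ring

theorem mul_le_outsideWeight (hg0 : 0 ≤ g) {p : ι × ι × ι}
    (hp : p.1 ∉ S ∨ p.2.1 ∉ S ∨ p.2.2 ∉ S) :
    g p.1 * g p.2.1 * g p.2.2 ≤ outsideWeight S g p := by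
  have hf0 : 0 ≤ Sᶜ.indicator g := Set.indicator_nonneg fun i _ => hg0 i
  have h1 := mul_nonneg (mul_nonneg (hf0 p.1) (hg0 p.2.1)) (hg0 p.2.2)
  have h2 := mul_nonneg (mul_nonneg (hg0 p.1) (hf0 p.2.1)) (hg0 p.2.2)
  have h3 := mul_nonneg (mul_nonneg (hg0 p.1) (hg0 p.2.1)) (hf0 p.2.2)
  unfold outsideWeight
  rcases hp with h | h | h <;> rw [Set.indicator_of_mem (s := Sᶜ) h] at * <;> linarith

end OutsideWeight

theorem RClosed.notMem_or_notMem_or_notMem {R : ℕ} {S : Set Z2} (hS : RClosed R S)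
    {n1 n2 n3 : Z2} (hn : n1 - n2 + n3 ∉ S) (hω : |omega4 n1 n2 n3 (n1 - n2 + n3)| ≤ R) :
    n1 ∉ S ∨ n2 ∉ S ∨ n3 ∉ S := by
  by_contra! h
  exact hn (hS n1 n2 n3 h.1 h.2.1 h.2.2 hω)

section TruncatedVectorField

variable {R : ℕ} {S : Set Z2} {x : Z2 → ℂ}

theorem norm_truncRHS_le_of_notMem (hS : RClosed R S) (hx : Summable (‖x ·‖)) {n : Z2}
    (hn : n ∉ S) (t : ℝ) :
    ‖truncRHS R x n t‖ ≤ (∑' m, ‖x m‖) ^ 2 * ‖x n‖ +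
      ∑' p, if p.1 - p.2.1 + p.2.2 = n then outsideWeight S (‖x ·‖) p else 0 := by
  have hw0 := outsideWeight_nonneg (S := S) (fun m => norm_nonneg (x m))
  have hfiber : Summable fun p =>
      if p.1 - p.2.1 + p.2.2 = n then outsideWeight S (‖x ·‖) p else 0 :=
    (hasSum_outsideWeight (fun m => norm_nonneg (x m)) hx).summable.of_nonneg_of_le
      (fun p => by split_ifs; exacts [hw0 p, le_rfl]) fun p => by split_ifs; exacts [le_rfl, hw0 p]
  unfold truncRHS
  rw [norm_mul, Complex.norm_I, one_mul]
  refine (norm_add_le _ _).trans (add_le_add ?_ (tsum_of_norm_bounded hfiber.hasSum fun p => ?_))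
  · rw [norm_mul, norm_neg, norm_pow, Complex.norm_real, norm_norm]
    have := hx.le_tsum n fun m _ => norm_nonneg (x m)
    gcongr
  · split_ifs with hp hpn
    · have hphase : ∀ (k : ℤ) (t : ℝ), ‖Complex.exp (Complex.I * (k : ℂ) * (t : ℂ))‖ = 1 :=
        fun k t => by simp [Complex.norm_exp]
      rw [norm_mul, norm_mul, norm_mul, RCLike.norm_conj, hphase, mul_one]
      refine mul_le_outsideWeight (fun m => norm_nonneg (x m)) ?_
      exact hS.notMem_or_notMem_or_notMem (hp.1 ▸ hn) (hp.1 ▸ hp.2.2.2)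
    · exact absurd hp.1 hpn
    · rw [norm_zero]; exact hw0 p
    · rw [norm_zero]

theorem sum_norm_truncRHS_le (hS : RClosed R S) (hx : Summable (‖x ·‖)) {s : Finset Z2}
    (hs : ∀ n ∈ s, n ∉ S) (t : ℝ) :
    ∑ n ∈ s, ‖truncRHS R x n t‖ ≤ 4 * (∑' m, ‖x m‖) ^ 2 * normOutside S x := by
  classical
  have hw := hasSum_outsideWeight (S := S) (fun m => norm_nonneg (x m)) hx
  calc ∑ n ∈ s, ‖truncRHS R x n t‖
      ≤ ∑ n ∈ s, ((∑' m, ‖x m‖) ^ 2 * ‖x n‖ +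
          ∑' p, if p.1 - p.2.1 + p.2.2 = n then outsideWeight S (‖x ·‖) p else 0) :=
        Finset.sum_le_sum fun n hn => norm_truncRHS_le_of_notMem hS hx (hs n hn) t
    _ = (∑' m, ‖x m‖) ^ 2 * ∑ n ∈ s, ‖x n‖ +
          ∑ n ∈ s, ∑' p, if p.1 - p.2.1 + p.2.2 = n then outsideWeight S (‖x ·‖) p else 0 := by
        rw [Finset.sum_add_distrib, Finset.mul_sum]
    _ ≤ (∑' m, ‖x m‖) ^ 2 * normOutside S x + 3 * (∑' m, ‖x m‖) ^ 2 * normOutside S x := by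
        gcongr
        · exact sum_norm_le_normOutside hx hs
        · exact (sum_tsum_ite_eq_le_tsum (outsideWeight_nonneg fun m => norm_nonneg (x m))
            hw.summable _ s).trans_eq hw.tsum_eq
    _ = 4 * (∑' m, ‖x m‖) ^ 2 * normOutside S x := by ring

end TruncatedVectorField

namespace IsTruncSolution

variable {R : ℕ} {I : Set ℝ} {a : ℝ → Z2 → ℂ}

theorem exists_tsum_norm_le_on_uIcc (ha : IsTruncSolution R I a) (hI : I.OrdConnected)
    {t₁ t₂ : ℝ} (h₁ : t₁ ∈ I) (h₂ : t₂ ∈ I) :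
    ∃ C, ∀ τ ∈ Set.uIcc t₁ t₂, ∑' m, ‖a τ m‖ ≤ C := by
  have hmin : t₁ ⊓ t₂ ∈ I := by rcases min_choice t₁ t₂ with h | h <;> rw [h] <;> assumption
  have hmax : t₁ ⊔ t₂ ∈ I := by rcases max_choice t₁ t₂ with h | h <;> rw [h] <;> assumption
  obtain ⟨C, hC⟩ := ha.2.1 _ hmin _ hmax
  exact ⟨C, fun τ hτ => hC τ ⟨hτ, hI.uIcc_subset h₁ h₂ hτ⟩⟩

theorem normOutside_le (ha : IsTruncSolution R I a) {S : Set Z2} (hS : RClosed R S)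
    {s u : ℝ} (hsu : Set.uIcc s u ⊆ I) (has : ∀ m ∉ S, a s m = 0) {C β : ℝ}
    (hC : ∀ τ ∈ Set.uIcc s u, ∑' m, ‖a τ m‖ ≤ C)
    (hβ : ∀ τ ∈ Set.uIcc s u, normOutside S (a τ) ≤ β) :
    normOutside S (a u) ≤ 4 * C ^ 2 * |u - s| * β := by
  obtain ⟨hsum, -, hderiv⟩ := ha
  have hβ0 : 0 ≤ β := normOutside_nonneg.trans (hβ s Set.left_mem_uIcc)
  have hderivD : ∀ n, ∀ τ ∈ Set.uIcc s u,
      HasDerivWithinAt (a · n) (truncRHS R (a τ) n τ) (Set.uIcc s u) τ :=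
    fun n τ hτ => (hderiv n τ (hsu hτ)).mono hsu
  refine normOutside_le_of_forall_sum_le (by positivity) fun E hE => ?_
  calc ∑ m ∈ E, ‖a u m‖ = ∑ m ∈ E, ‖a u m - a s m‖ :=
        Finset.sum_congr rfl fun m hm => by rw [has m (hE m hm), sub_zero]
    _ ≤ 4 * C ^ 2 * β * ‖u - s‖ :=
        (convex_uIcc s u).sum_norm_sub_le_of_hasDerivWithinAt E (fun n _ => hderivD n)
          (fun τ hτ => (sum_norm_truncRHS_le hS (hsum τ (hsu hτ)) hE τ).trans <| by
            have hL0 : 0 ≤ ∑' m, ‖a τ m‖ := tsum_nonneg fun m => norm_nonneg _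
            gcongr
            exacts [normOutside_nonneg, hC τ hτ, hβ τ hτ])
          Set.left_mem_uIcc Set.right_mem_uIcc
    _ = 4 * C ^ 2 * |u - s| * β := by rw [Real.norm_eq_abs]; ring

end IsTruncSolution

/-- If `S ⊆ ℤ²` satisfies the `R`-closure condition and `a` is a
solution of the `R`-truncated system on an interval `I ∋ 0` with initial data
supported in `S`, then `a(t)` is supported in `S` for all `t ∈ I`. -/
theorem trunc_support_preserved
    (R : ℕ) (S : Set Z2) (hS : RClosed R S)
    (I : Set ℝ) (hI : I.OrdConnected) (h0I : (0 : ℝ) ∈ I)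
    (a : ℝ → Z2 → ℂ) (ha : IsTruncSolution R I a)
    (hinit : ∀ n : Z2, n ∉ S → a 0 n = 0) :
    ∀ t ∈ I, ∀ n : Z2, n ∉ S → a t n = 0 := by
  intro t ht
  have hJI : Set.uIcc 0 t ⊆ I := hI.uIcc_subset h0I ht
  obtain ⟨C, hC⟩ := ha.exists_tsum_norm_le_on_uIcc hI h0I ht
  have hvanish : Set.EqOn (fun τ => normOutside S (a τ)) 0 (Set.uIcc 0 t) := by
    refine Set.ordConnected_uIcc.eqOn_zero_of_growth_bound (K := 4 * C ^ 2) (by positivity)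
      (fun τ _ => normOutside_nonneg) ⟨C, ?_⟩ (fun s hs u hu hFs β hβ => ?_) Set.left_mem_uIcc
      ((normOutside_eq_zero_iff (ha.1 0 h0I)).mpr hinit)
    · rintro _ ⟨τ, hτ, rfl⟩
      exact (normOutside_le_tsum_norm (ha.1 τ (hJI hτ))).trans (hC τ hτ)
    · have hsub : Set.uIcc s u ⊆ Set.uIcc 0 t := Set.uIcc_subset_uIcc hs hu
      exact ha.normOutside_le hS (hsub.trans hJI)
        ((normOutside_eq_zero_iff (ha.1 s (hJI hs))).mp hFs) (fun τ hτ => hC τ (hsub hτ)) hβ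
  exact (normOutside_eq_zero_iff (ha.1 t ht)).mp (hvanish Set.right_mem_uIcc)

end
end

section
/- Let R ∈ {0} ∪ ℕ and let S1, S2 be finite disjoint subsets of ℤ², each satisfying the R-closure condition, which are not connected by any parallelogram of eccentricity at most R in the following sense: whenever n1, n2 lie in one of the two sets and n3 lies in the other, then |ω₄(n1, n2, n3, n1−n2+n3)| > R and |ω₄(n1, n3, n2, n1−n3+n2)| > R, where ω₄(m1,m2,m3,m4) := |m1|² − |m2|² + |m3|² − |m4|². If a and b are solutions of the R-truncated system on an interval I containing 0, with a_n(0) = 0 for n ∉ S1 and b_n(0) = 0 for n ∉ S2, then t ↦ (a_n(t) + b_n(t))_{n∈ℤ²} is also a solution of the R-truncated system on I. -/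
open scoped BigOperators ENNReal NNReal
open Complex

noncomputable section

/-!
An `R`-closed set `S` is invariant under the truncated flow: a mode outside `S` can only be fed
by an interaction having an input mode outside `S`, so the `ℓ¹` mass of a solution outside `S` has
derivative at most `4 M²` times itself, `M` bounding the total `ℓ¹` mass. By Gronwall's inequality,
applied forward in time and to `t ↦ a (-t)` backward, this mass stays zero. Hence `a` and `b` stay
supported in `S1` and `S2`, and since no interaction with `|ω₄| ≤ R` mixes modes of `S1` and `S2`,
the nonlinearity of the truncated system is additive on `a + b`.
-/

open MeasureTheory Set

theorem ENNReal.tsum_mul_tsum_mul_tsum {α β γ : Type*} (f : α → ℝ≥0∞) (g : β → ℝ≥0∞)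
    (h : γ → ℝ≥0∞) :
    ∑' p : α × β × γ, f p.1 * g p.2.1 * h p.2.2 = (∑' i, f i) * (∑' j, g j) * ∑' k, h k := by
  simp_rw [ENNReal.tsum_prod', mul_assoc, ENNReal.tsum_mul_left, ENNReal.tsum_mul_right]

theorem tsum_enorm_le_ofReal {ι E : Type*} [NormedAddCommGroup E] {f : ι → E}
    (hf : Summable (‖f ·‖)) {C : ℝ} (hC : ∑' i, ‖f i‖ ≤ C) :
    ∑' i, ‖f i‖ₑ ≤ ENNReal.ofReal C := by
  simp_rw [← ofReal_norm]
  rw [← ENNReal.ofReal_tsum_of_nonneg (fun _ => norm_nonneg _) hf]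
  exact ENNReal.ofReal_le_ofReal hC

theorem enorm_sub_le_lintegral_deriv {E : Type*} [NormedAddCommGroup E] [NormedSpace ℝ E]
    [CompleteSpace E] {f : ℝ → E} {a b : ℝ} (hab : a ≤ b) (hcont : ContinuousOn f (Icc a b))
    (hdiff : DifferentiableOn ℝ f (Ioo a b)) :
    ‖f b - f a‖ₑ ≤ ∫⁻ s in Ioo a b, ‖deriv f s‖ₑ := by
  rw [setLIntegral_congr Ioo_ae_eq_Ioc]
  by_cases hfin : ∫⁻ s in Ioc a b, ‖deriv f s‖ₑ = ⊤
  · simp [hfin]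
  have hint : IntegrableOn (deriv f) (Ioc a b) :=
    ⟨(stronglyMeasurable_deriv f).aestronglyMeasurable, lt_top_iff_ne_top.2 hfin⟩
  rw [← intervalIntegral.integral_eq_sub_of_hasDerivAt_of_le hab hcont
    (fun s hs => ((hdiff s hs).differentiableAt (Ioo_mem_nhds hs.1 hs.2)).hasDerivAt)
    ((intervalIntegrable_iff_integrableOn_Ioc_of_le hab).2 hint),
    intervalIntegral.integral_of_le hab]
  exact enorm_integral_le_lintegral_enorm _

theorem ofReal_mul_lintegral_pow_div_factorial {c t : ℝ} (hc : 0 ≤ c) (ht : 0 ≤ t) (k : ℕ) :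
    ENNReal.ofReal c * ∫⁻ s in Ioo 0 t, ENNReal.ofReal ((c * s) ^ k / k.factorial)
      = ENNReal.ofReal ((c * t) ^ (k + 1) / (k + 1).factorial) := by
  have hint : IntegrableOn (fun s : ℝ => (c * s) ^ k / k.factorial) (Ioo 0 t) :=
    (continuous_const.mul continuous_id).pow k |>.div_const _ |>.integrableOn_Icc.mono_set
      Ioo_subset_Icc_self
  rw [← ofReal_integral_eq_lintegral_ofReal hint
    ((ae_restrict_iff' measurableSet_Ioo).2 (.of_forall fun s hs => by
      have := hs.1.le; positivity)),
    ← ENNReal.ofReal_mul hc, ← integral_Ioc_eq_integral_Ioo, ← intervalIntegral.integral_of_le ht]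
  simp_rw [mul_pow]
  rw [intervalIntegral.integral_div, intervalIntegral.integral_const_mul, integral_pow,
    Nat.factorial_succ]
  congr 1
  push_cast
  field_simp
  ring

theorem eq_zero_of_le_mul_lintegral {f : ℝ → ℝ≥0∞} {B K : ℝ≥0∞} {T : ℝ} (hB : B ≠ ⊤) (hK : K ≠ ⊤)
    (hfB : ∀ t ∈ Icc 0 T, f t ≤ B)
    (hf : ∀ t ∈ Icc 0 T, f t ≤ K * ∫⁻ s in Ioo 0 t, f s) :
    ∀ t ∈ Icc 0 T, f t = 0 := by
  obtain ⟨c, hc, rfl⟩ : ∃ c : ℝ, 0 ≤ c ∧ K = ENNReal.ofReal c :=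
    ⟨K.toReal, ENNReal.toReal_nonneg, (ENNReal.ofReal_toReal hK).symm⟩
  have bound : ∀ k : ℕ, ∀ t ∈ Icc 0 T,
      f t ≤ B * ENNReal.ofReal ((c * t) ^ k / k.factorial) := by
    intro k
    induction k with
    | zero => intro t ht; simpa using hfB t ht
    | succ k ih =>
      intro t ht
      calc f t ≤ ENNReal.ofReal c * ∫⁻ s in Ioo 0 t, f s := hf t ht
        _ ≤ ENNReal.ofReal c * ∫⁻ s in Ioo 0 t, B * ENNReal.ofReal ((c * s) ^ k / k.factorial) :=
          mul_le_mul_right (setLIntegral_mono' measurableSet_Ioo fun s hs =>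
            ih s ⟨hs.1.le, hs.2.le.trans ht.2⟩) _
        _ = B * ENNReal.ofReal ((c * t) ^ (k + 1) / (k + 1).factorial) := by
          rw [lintegral_const_mul' _ _ hB, mul_left_comm,
            ofReal_mul_lintegral_pow_div_factorial hc ht.1]
  intro t ht
  have hlim := ENNReal.Tendsto.const_mul
    (ENNReal.tendsto_ofReal (Real.summable_pow_div_factorial (c * t)).tendsto_atTop_zero)
    (Or.inr hB)
  rw [ENNReal.ofReal_zero, mul_zero] at hlim
  exact le_antisymm (ge_of_tendsto' hlim fun k => bound k t ht) zero_le

theorem eq_zero_of_tsum_enorm_deriv_le {ι E : Type*} [Countable ι] [NormedAddCommGroup E]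
    [NormedSpace ℝ E] [CompleteSpace E] {a : ℝ → ι → E} {S : Set ι} {T : ℝ} {B K : ℝ≥0∞}
    (hB : B ≠ ⊤) (hK : K ≠ ⊤) (hcont : ∀ n, ContinuousOn (a · n) (Icc 0 T))
    (hdiff : ∀ n, DifferentiableOn ℝ (a · n) (Ioo 0 T))
    (hmass : ∀ t ∈ Icc 0 T, ∑' n : ↥Sᶜ, ‖a t n‖ₑ ≤ B)
    (hderiv : ∀ t ∈ Ioo 0 T, ∑' n : ↥Sᶜ, ‖deriv (a · n) t‖ₑ ≤ K * ∑' n : ↥Sᶜ, ‖a t n‖ₑ)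
    (h0 : ∀ n ∉ S, a 0 n = 0) :
    ∀ t ∈ Icc 0 T, ∀ n ∉ S, a t n = 0 := by
  have hgronwall := eq_zero_of_le_mul_lintegral hB hK hmass fun t ht => calc
    ∑' n : ↥Sᶜ, ‖a t n‖ₑ ≤ ∑' n : ↥Sᶜ, ∫⁻ s in Ioo 0 t, ‖deriv (a · n) s‖ₑ :=
      ENNReal.tsum_le_tsum fun n => by
        simpa [h0 n n.2] using enorm_sub_le_lintegral_deriv ht.1
          ((hcont n).mono (Icc_subset_Icc_right ht.2)) ((hdiff n).mono (Ioo_subset_Ioo_right ht.2))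
    _ = ∫⁻ s in Ioo 0 t, ∑' n : ↥Sᶜ, ‖deriv (a · n) s‖ₑ :=
      (lintegral_tsum fun n => (stronglyMeasurable_deriv _).aestronglyMeasurable.enorm).symm
    _ ≤ ∫⁻ s in Ioo 0 t, K * ∑' n : ↥Sᶜ, ‖a s n‖ₑ :=
      setLIntegral_mono' measurableSet_Ioo fun s hs => hderiv s ⟨hs.1, hs.2.trans_le ht.2⟩
    _ = K * ∫⁻ s in Ioo 0 t, ∑' n : ↥Sᶜ, ‖a s n‖ₑ := lintegral_const_mul' _ _ hK
  intro t ht n hn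
  simpa using ENNReal.tsum_eq_zero.1 (hgronwall t ht) ⟨n, hn⟩

-- The index set `Γ^R(n)` of the `R`-truncated system.
def truncGamma (R : ℕ) (n : Z2) : Set (Z2 × Z2 × Z2) :=
  {p | p.1 - p.2.1 + p.2.2 = n ∧ p.1 ≠ n ∧ p.2.2 ≠ n ∧ |omega4 p.1 p.2.1 p.2.2 n| ≤ (R : ℤ)}

def truncTerm (R : ℕ) (x : Z2 → ℂ) (n : Z2) (t : ℝ) : Z2 × Z2 × Z2 → ℂ :=
  (truncGamma R n).indicator fun p => x p.1 * (starRingEnd ℂ) (x p.2.1) * x p.2.2 *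
    Complex.exp (Complex.I * ((omega4 p.1 p.2.1 p.2.2 n : ℤ) : ℂ) * (t : ℂ))

theorem truncRHS_eq (R : ℕ) (x : Z2 → ℂ) (n : Z2) (t : ℝ) :
    truncRHS R x n t = Complex.I * (-((‖x n‖ : ℂ) ^ 2) * x n + ∑' p, truncTerm R x n t p) := by
  simp only [truncRHS, truncTerm, indicator_apply, truncGamma, mem_ofPred_eq]

theorem enorm_truncTerm (R : ℕ) (x : Z2 → ℂ) (n : Z2) (t : ℝ) (p : Z2 × Z2 × Z2) :
    ‖truncTerm R x n t p‖ₑ =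
      (truncGamma R n).indicator (fun p => ‖x p.1‖ₑ * ‖x p.2.1‖ₑ * ‖x p.2.2‖ₑ) p := by
  rw [truncTerm, enorm_indicator_eq_indicator_enorm]
  congr 1
  ext p
  have hphase : Complex.I * ((omega4 p.1 p.2.1 p.2.2 n : ℤ) : ℂ) * (t : ℂ)
      = Complex.I * ((omega4 p.1 p.2.1 p.2.2 n * t : ℝ) : ℂ) := by
    push_cast; ring
  rw [enorm_mul, hphase, Complex.enorm_exp_I_mul_ofReal, mul_one, enorm_mul, enorm_mul,
    RCLike.enorm_conj]

theorem truncTerm_eq_zero_of_ne (R : ℕ) (x : Z2 → ℂ) {n : Z2} (t : ℝ) {p : Z2 × Z2 × Z2}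
    (hp : p.1 - p.2.1 + p.2.2 ≠ n) : truncTerm R x n t p = 0 :=
  indicator_of_notMem (fun h => hp h.1) _

theorem tsum_enorm_truncTerm_le (R : ℕ) (x : Z2 → ℂ) (n : Z2) (t : ℝ) :
    ∑' p, ‖truncTerm R x n t p‖ₑ ≤ (∑' m, ‖x m‖ₑ) ^ 3 := by
  calc ∑' p, ‖truncTerm R x n t p‖ₑ ≤ ∑' p : Z2 × Z2 × Z2, ‖x p.1‖ₑ * ‖x p.2.1‖ₑ * ‖x p.2.2‖ₑ :=
        ENNReal.tsum_le_tsum fun p => (enorm_truncTerm R x n t p).trans_le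
          (indicator_le_self _ _ p)
    _ = (∑' m, ‖x m‖ₑ) ^ 3 := by
      rw [ENNReal.tsum_mul_tsum_mul_tsum (‖x ·‖ₑ) (‖x ·‖ₑ) (‖x ·‖ₑ)]; ring

theorem summable_truncTerm (R : ℕ) {x : Z2 → ℂ} (hx : Summable (‖x ·‖)) (n : Z2) (t : ℝ) :
    Summable (truncTerm R x n t) :=
  .of_norm <| tsum_enorm_ne_top_iff_summable_norm.1 <| ne_top_of_le_ne_top
    (ENNReal.pow_ne_top (tsum_enorm_ne_top_iff_summable_norm.2 hx))
    (tsum_enorm_truncTerm_le R x n t)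

theorem enorm_truncRHS_le (R : ℕ) (x : Z2 → ℂ) (n : Z2) (t : ℝ) :
    ‖truncRHS R x n t‖ₑ ≤ ‖x n‖ₑ ^ 3 + ∑' p, ‖truncTerm R x n t p‖ₑ := by
  have hI : ‖Complex.I‖ₑ = 1 := by simp [← ofReal_norm]
  rw [truncRHS_eq, enorm_mul, hI, one_mul]
  refine (enorm_add_le _ _).trans (add_le_add (le_of_eq ?_) enorm_tsum_le_tsum_enorm)
  rw [enorm_mul, enorm_neg, enorm_pow, ← ofReal_norm, Complex.norm_real, norm_norm, ofReal_norm]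
  ring

theorem enorm_truncTerm_le_of_rClosed {R : ℕ} {S : Set Z2} (hS : RClosed R S) (x : Z2 → ℂ)
    {n : Z2} (hn : n ∉ S) (t : ℝ) (p : Z2 × Z2 × Z2) :
    ‖truncTerm R x n t p‖ₑ ≤ Sᶜ.indicator (‖x ·‖ₑ) p.1 * ‖x p.2.1‖ₑ * ‖x p.2.2‖ₑ
      + ‖x p.1‖ₑ * Sᶜ.indicator (‖x ·‖ₑ) p.2.1 * ‖x p.2.2‖ₑ
      + ‖x p.1‖ₑ * ‖x p.2.1‖ₑ * Sᶜ.indicator (‖x ·‖ₑ) p.2.2 := by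
  rw [enorm_truncTerm]
  by_cases hp : p ∈ truncGamma R n
  · rw [indicator_of_mem hp]
    obtain ⟨rfl, -, -, hω⟩ := hp
    have hout : p.1 ∉ S ∨ p.2.1 ∉ S ∨ p.2.2 ∉ S := by
      by_contra! h
      exact hn (hS _ _ _ h.1 h.2.1 h.2.2 hω)
    rcases hout with h | h | h
    · rw [indicator_of_mem (mem_compl h), add_assoc]
      exact le_self_add
    · rw [indicator_of_mem (mem_compl h)]
      exact le_add_self.trans le_self_add
    · rw [indicator_of_mem (mem_compl h)]
      exact le_add_self
  · rw [indicator_of_notMem hp]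
    exact zero_le

theorem tsum_compl_tsum_enorm_truncTerm_le {R : ℕ} {S : Set Z2} (hS : RClosed R S)
    (x : Z2 → ℂ) (t : ℝ) :
    ∑' n : ↥Sᶜ, ∑' p, ‖truncTerm R x n t p‖ₑ
      ≤ 3 * (∑' m, ‖x m‖ₑ) ^ 2 * ∑' n : ↥Sᶜ, ‖x n‖ₑ := by
  have hsingle : ∀ p : Z2 × Z2 × Z2, ∑' n : ↥Sᶜ, ‖truncTerm R x n t p‖ₑ
      ≤ Sᶜ.indicator (‖x ·‖ₑ) p.1 * ‖x p.2.1‖ₑ * ‖x p.2.2‖ₑ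
        + ‖x p.1‖ₑ * Sᶜ.indicator (‖x ·‖ₑ) p.2.1 * ‖x p.2.2‖ₑ
        + ‖x p.1‖ₑ * ‖x p.2.1‖ₑ * Sᶜ.indicator (‖x ·‖ₑ) p.2.2 := by
    intro p
    have hzero : ∀ n : ↥Sᶜ, p.1 - p.2.1 + p.2.2 ≠ n → ‖truncTerm R x n t p‖ₑ = 0 :=
      fun n hn => by rw [truncTerm_eq_zero_of_ne R x t hn, enorm_zero]
    by_cases hp : p.1 - p.2.1 + p.2.2 ∈ Sᶜ
    · rw [tsum_eq_single ⟨_, hp⟩ fun n hn => hzero n fun h => hn (Subtype.ext h.symm)]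
      exact enorm_truncTerm_le_of_rClosed hS x hp t p
    · rw [ENNReal.tsum_eq_zero.2 fun n => hzero n fun h => hp (h ▸ n.2)]
      exact zero_le
  calc ∑' n : ↥Sᶜ, ∑' p, ‖truncTerm R x n t p‖ₑ = ∑' p, ∑' n : ↥Sᶜ, ‖truncTerm R x n t p‖ₑ :=
        ENNReal.tsum_comm
    _ ≤ _ := ENNReal.tsum_le_tsum hsingle
    _ = 3 * (∑' m, ‖x m‖ₑ) ^ 2 * ∑' n : ↥Sᶜ, ‖x n‖ₑ := by
      rw [ENNReal.tsum_add, ENNReal.tsum_add,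
        ENNReal.tsum_mul_tsum_mul_tsum (Sᶜ.indicator (‖x ·‖ₑ)) (‖x ·‖ₑ) (‖x ·‖ₑ),
        ENNReal.tsum_mul_tsum_mul_tsum (‖x ·‖ₑ) (Sᶜ.indicator (‖x ·‖ₑ)) (‖x ·‖ₑ),
        ENNReal.tsum_mul_tsum_mul_tsum (‖x ·‖ₑ) (‖x ·‖ₑ) (Sᶜ.indicator (‖x ·‖ₑ)),
        ← tsum_subtype]
      ring

theorem tsum_compl_enorm_truncRHS_le {R : ℕ} {S : Set Z2} (hS : RClosed R S)
    (x : Z2 → ℂ) (t : ℝ) :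
    ∑' n : ↥Sᶜ, ‖truncRHS R x n t‖ₑ ≤ 4 * (∑' m, ‖x m‖ₑ) ^ 2 * ∑' n : ↥Sᶜ, ‖x n‖ₑ := by
  have hdiag : ∑' n : ↥Sᶜ, ‖x n‖ₑ ^ 3 ≤ (∑' m, ‖x m‖ₑ) ^ 2 * ∑' n : ↥Sᶜ, ‖x n‖ₑ := by
    rw [← ENNReal.tsum_mul_left]
    refine ENNReal.tsum_le_tsum fun n => ?_
    rw [pow_succ]
    gcongr
    exact ENNReal.le_tsum (f := (‖x ·‖ₑ)) _
  calc ∑' n : ↥Sᶜ, ‖truncRHS R x n t‖ₑ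
      ≤ ∑' n : ↥Sᶜ, (‖x n‖ₑ ^ 3 + ∑' p, ‖truncTerm R x n t p‖ₑ) :=
        ENNReal.tsum_le_tsum fun n => enorm_truncRHS_le R x n t
    _ = ∑' n : ↥Sᶜ, ‖x n‖ₑ ^ 3 + ∑' n : ↥Sᶜ, ∑' p, ‖truncTerm R x n t p‖ₑ := ENNReal.tsum_add
    _ ≤ (∑' m, ‖x m‖ₑ) ^ 2 * ∑' n : ↥Sᶜ, ‖x n‖ₑ
        + 3 * (∑' m, ‖x m‖ₑ) ^ 2 * ∑' n : ↥Sᶜ, ‖x n‖ₑ :=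
        add_le_add hdiag (tsum_compl_tsum_enorm_truncTerm_le hS x t)
    _ = 4 * (∑' m, ‖x m‖ₑ) ^ 2 * ∑' n : ↥Sᶜ, ‖x n‖ₑ := by ring

-- `σ` lets this also cover the time-reversed solution `t ↦ a (-t)`, whose derivative is
-- `-truncRHS` evaluated at time `-t`.
theorem eq_zero_of_hasDerivWithinAt_of_enorm_le_truncRHS {R : ℕ} {S : Set Z2}
    (hS : RClosed R S) {a D : ℝ → Z2 → ℂ} {J : Set ℝ} {T : ℝ} {B : ℝ≥0∞} (σ : ℝ → ℝ)
    (hB : B ≠ ⊤) (hTJ : Icc 0 T ⊆ J) (hD : ∀ n, ∀ s ∈ J, HasDerivWithinAt (a · n) (D s n) J s)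
    (hDle : ∀ s ∈ J, ∀ n, ‖D s n‖ₑ ≤ ‖truncRHS R (a s) n (σ s)‖ₑ)
    (hmass : ∀ s ∈ Icc 0 T, ∑' n, ‖a s n‖ₑ ≤ B) (h0 : ∀ n ∉ S, a 0 n = 0) :
    ∀ t ∈ Icc 0 T, ∀ n ∉ S, a t n = 0 := by
  have hIoo : Ioo 0 T ⊆ J := Ioo_subset_Icc_self.trans hTJ
  refine eq_zero_of_tsum_enorm_deriv_le hB (K := 4 * B ^ 2) (by finiteness)
    (fun n s hs => (hD n s (hTJ hs)).continuousWithinAt.mono hTJ)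
    (fun n s hs => ((hD n s (hIoo hs)).mono hIoo).differentiableWithinAt)
    (fun s hs => (ENNReal.tsum_comp_le_tsum_of_injective Subtype.coe_injective _).trans
      (hmass s hs)) (fun s hs => ?_) h0
  have hderiv : ∀ n, deriv (a · n) s = D s n := fun n =>
    ((hD n s (hIoo hs)).hasDerivAt (Filter.mem_of_superset (Ioo_mem_nhds hs.1 hs.2) hIoo)).deriv
  calc ∑' n : ↥Sᶜ, ‖deriv (a · n) s‖ₑ ≤ ∑' n : ↥Sᶜ, ‖truncRHS R (a s) n (σ s)‖ₑ :=
        ENNReal.tsum_le_tsum fun n => (hderiv n).symm ▸ hDle s (hIoo hs) n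
    _ ≤ 4 * (∑' m, ‖a s m‖ₑ) ^ 2 * ∑' n : ↥Sᶜ, ‖a s n‖ₑ := tsum_compl_enorm_truncRHS_le hS _ _
    _ ≤ 4 * B ^ 2 * ∑' n : ↥Sᶜ, ‖a s n‖ₑ := by gcongr; exact hmass s (Ioo_subset_Icc_self hs)

theorem IsTruncSolution.eq_zero_of_notMem {R : ℕ} {S : Set Z2} (hS : RClosed R S) {I : Set ℝ}
    (hI : I.OrdConnected) (h0I : (0 : ℝ) ∈ I) {a : ℝ → Z2 → ℂ} (ha : IsTruncSolution R I a)
    (h0 : ∀ n ∉ S, a 0 n = 0) : ∀ t ∈ I, ∀ n ∉ S, a t n = 0 := by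
  obtain ⟨hsum, hbdd, hD⟩ := ha
  intro t ht n hn
  rcases le_total 0 t with h | h
  · obtain ⟨C, hC⟩ := hbdd 0 h0I t ht
    exact eq_zero_of_hasDerivWithinAt_of_enorm_le_truncRHS hS id ENNReal.ofReal_ne_top
      (hI.out h0I ht) hD (fun _ _ _ => le_rfl)
      (fun s hs => tsum_enorm_le_ofReal (hsum s (hI.out h0I ht hs)) (hC s ⟨hs, hI.out h0I ht hs⟩))
      h0 t ⟨h, le_rfl⟩ n hn
  · obtain ⟨C, hC⟩ := hbdd t ht 0 h0I
    have hTJ : Icc 0 (-t) ⊆ Neg.neg ⁻¹' I := fun s hs =>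
      hI.out ht h0I ⟨by linarith [hs.2], by linarith [hs.1]⟩
    have hrev := eq_zero_of_hasDerivWithinAt_of_enorm_le_truncRHS hS (a := fun τ => a (-τ))
      (D := fun τ n => -truncRHS R (a (-τ)) n (-τ)) Neg.neg ENNReal.ofReal_ne_top hTJ
      (fun n s hs => ((hD n (-s) hs).scomp s (hasDerivAt_neg s).hasDerivWithinAt
        fun _ h => h).congr_deriv (neg_one_smul ℝ _))
      (fun s _ n => (enorm_neg _).le)
      (fun s hs => tsum_enorm_le_ofReal (hsum _ (hTJ hs))
        (hC _ ⟨⟨by linarith [hs.2], by linarith [hs.1]⟩, hTJ hs⟩))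
      (by simpa using h0) (-t) ⟨by linarith, le_rfl⟩ n hn
    simpa using hrev

theorem omega4_swap_outer (n1 n2 n3 : Z2) :
    omega4 n3 n2 n1 (n3 - n2 + n1) = omega4 n1 n2 n3 (n1 - n2 + n3) := by
  rw [show n3 - n2 + n1 = n1 - n2 + n3 by abel]
  unfold omega4
  ring

theorem NotConnected.of_abs_omega4_le {R : ℕ} {S1 S2 : Set Z2} (hnc : NotConnected R S1 S2)
    (hdisj : Disjoint S1 S2) {p1 p2 p3 : Z2} (h21 : p2 ≠ p1) (h23 : p2 ≠ p3)
    (hω : |omega4 p1 p2 p3 (p1 - p2 + p3)| ≤ (R : ℤ))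
    (h1 : p1 ∈ S1 ∪ S2) (h2 : p2 ∈ S1 ∪ S2) (h3 : p3 ∈ S1 ∪ S2) :
    (p1 ∈ S1 ∧ p2 ∈ S1 ∧ p3 ∈ S1) ∨ (p1 ∈ S2 ∧ p2 ∈ S2 ∧ p3 ∈ S2) := by
  have hω' := omega4_swap_outer p1 p2 p3 ▸ hω
  rcases h1 with h1 | h1 <;> rcases h2 with h2 | h2 <;> rcases h3 with h3 | h3
  · exact .inl ⟨h1, h2, h3⟩
  · exact absurd hω ((hnc p1 p2 p3 (.inl ⟨h1, h2, h3⟩)).1 h21.symm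
      (hdisj.ne_of_mem h2 h3)).not_ge
  · exact absurd hω ((hnc p1 p3 p2 (.inl ⟨h1, h3, h2⟩)).2 (hdisj.ne_of_mem h1 h2)
      h23).not_ge
  · exact absurd hω' ((hnc p3 p2 p1 (.inr ⟨h3, h2, h1⟩)).1 h23.symm
      (hdisj.ne_of_mem h1 h2).symm).not_ge
  · exact absurd hω' ((hnc p3 p2 p1 (.inl ⟨h3, h2, h1⟩)).1 h23.symm
      (hdisj.ne_of_mem h2 h1)).not_ge
  · exact absurd hω ((hnc p1 p3 p2 (.inr ⟨h1, h3, h2⟩)).2 (hdisj.ne_of_mem h2 h1).symm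
      h23).not_ge
  · exact absurd hω ((hnc p1 p2 p3 (.inr ⟨h1, h2, h3⟩)).1 h21.symm
      (hdisj.ne_of_mem h3 h2).symm).not_ge
  · exact .inr ⟨h1, h2, h3⟩

theorem truncTerm_add {R : ℕ} {S1 S2 : Set Z2} (hdisj : Disjoint S1 S2)
    (hnc : NotConnected R S1 S2) {x y : Z2 → ℂ} (hx : ∀ m ∉ S1, x m = 0)
    (hy : ∀ m ∉ S2, y m = 0) (n : Z2) (t : ℝ) (p : Z2 × Z2 × Z2) :
    truncTerm R (fun m => x m + y m) n t p = truncTerm R x n t p + truncTerm R y n t p := by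
  by_cases hp : p ∈ truncGamma R n
  · simp only [truncTerm, indicator_of_mem hp]
    obtain ⟨rfl, h1n, h3n, hω⟩ := hp
    have h21 : p.2.1 ≠ p.1 := fun h => h3n (by rw [h]; abel)
    have h23 : p.2.1 ≠ p.2.2 := fun h => h1n (by rw [h]; abel)
    by_cases hall : p.1 ∈ S1 ∪ S2 ∧ p.2.1 ∈ S1 ∪ S2 ∧ p.2.2 ∈ S1 ∪ S2
    · rcases hnc.of_abs_omega4_le hdisj h21 h23 hω hall.1 hall.2.1 hall.2.2 with
        ⟨h1, h2, h3⟩ | ⟨h1, h2, h3⟩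
      · simp [hy _ (hdisj.notMem_of_mem_left h1), hy _ (hdisj.notMem_of_mem_left h2),
          hy _ (hdisj.notMem_of_mem_left h3)]
      · simp [hx _ (hdisj.notMem_of_mem_right h1), hx _ (hdisj.notMem_of_mem_right h2),
          hx _ (hdisj.notMem_of_mem_right h3)]
    · simp only [mem_union, not_and_or, not_or] at hall
      rcases hall with ⟨h1, h1'⟩ | ⟨h2, h2'⟩ | ⟨h3, h3'⟩
      · simp [hx _ h1, hy _ h1']
      · simp [hx _ h2, hy _ h2']
      · simp [hx _ h3, hy _ h3']
  · simp [truncTerm, indicator_of_notMem hp]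

theorem truncRHS_add {R : ℕ} {S1 S2 : Set Z2} (hdisj : Disjoint S1 S2)
    (hnc : NotConnected R S1 S2) {x y : Z2 → ℂ} (hxs : Summable (‖x ·‖))
    (hys : Summable (‖y ·‖)) (hx : ∀ m ∉ S1, x m = 0) (hy : ∀ m ∉ S2, y m = 0) (n : Z2)
    (t : ℝ) :
    truncRHS R (fun m => x m + y m) n t = truncRHS R x n t + truncRHS R y n t := by
  have hdiag : -((‖x n + y n‖ : ℂ) ^ 2) * (x n + y n)
      = -((‖x n‖ : ℂ) ^ 2) * x n + -((‖y n‖ : ℂ) ^ 2) * y n := by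
    by_cases hn : n ∈ S1
    · simp [hy n (hdisj.notMem_of_mem_left hn)]
    · simp [hx n hn]
  simp only [truncRHS_eq, truncTerm_add hdisj hnc hx hy,
    (summable_truncTerm R hxs n t).tsum_add (summable_truncTerm R hys n t), hdiag]
  ring

theorem IsTruncSolution.add {R : ℕ} {I : Set ℝ} {a b : ℝ → Z2 → ℂ}
    (ha : IsTruncSolution R I a) (hb : IsTruncSolution R I b)
    (hsplit : ∀ t ∈ I, ∀ n, truncRHS R (fun m => a t m + b t m) n t
      = truncRHS R (a t) n t + truncRHS R (b t) n t) :
    IsTruncSolution R I (fun t n => a t n + b t n) := by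
  obtain ⟨hsa, hba, hDa⟩ := ha
  obtain ⟨hsb, hbb, hDb⟩ := hb
  have hsum : ∀ t ∈ I, Summable fun n => ‖a t n‖ + ‖b t n‖ := fun t ht =>
    (hsa t ht).add (hsb t ht)
  have hsum' : ∀ t ∈ I, Summable fun n => ‖a t n + b t n‖ := fun t ht =>
    (hsum t ht).of_nonneg_of_le (fun _ => norm_nonneg _) fun _ => norm_add_le _ _
  refine ⟨hsum', fun t1 ht1 t2 ht2 => ?_, fun n t ht => ?_⟩
  · obtain ⟨C, hC⟩ := hba t1 ht1 t2 ht2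
    obtain ⟨C', hC'⟩ := hbb t1 ht1 t2 ht2
    refine ⟨C + C', fun t ht => ?_⟩
    calc ∑' n, ‖a t n + b t n‖ ≤ ∑' n, (‖a t n‖ + ‖b t n‖) :=
          (hsum' t ht.2).tsum_le_tsum (fun _ => norm_add_le _ _) (hsum t ht.2)
      _ = ∑' n, ‖a t n‖ + ∑' n, ‖b t n‖ := (hsa t ht.2).tsum_add (hsb t ht.2)
      _ ≤ C + C' := add_le_add (hC t ht) (hC' t ht)
  · rw [hsplit t ht n]
    exact (hDa n t ht).add (hDb n t ht)

/-- Pasting lemma: if `S1, S2` are finite disjoint `R`-closed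
subsets of `ℤ²` which are not connected by any parallelogram of eccentricity `≤ R`,
and `a, b` solve the `R`-truncated system on an interval `I ∋ 0` with initial data
supported in `S1` and `S2` respectively, then `a + b` also solves the `R`-truncated
system on `I`. -/
theorem pasting_lemma
    (R : ℕ) (S1 S2 : Finset Z2) (hdisj : Disjoint S1 S2)
    (h1 : RClosed R (S1 : Set Z2)) (h2 : RClosed R (S2 : Set Z2))
    (hnc : NotConnected R (S1 : Set Z2) (S2 : Set Z2))
    (I : Set ℝ) (hI : I.OrdConnected) (h0I : (0 : ℝ) ∈ I)
    (a b : ℝ → Z2 → ℂ)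
    (ha : IsTruncSolution R I a) (hb : IsTruncSolution R I b)
    (hasupp : ∀ n : Z2, n ∉ S1 → a 0 n = 0)
    (hbsupp : ∀ n : Z2, n ∉ S2 → b 0 n = 0) :
    IsTruncSolution R I (fun t n => a t n + b t n) := by
  have ha0 := ha.eq_zero_of_notMem h1 hI h0I hasupp
  have hb0 := hb.eq_zero_of_notMem h2 hI h0I hbsupp
  exact ha.add hb fun t ht n => truncRHS_add (Finset.disjoint_coe.2 hdisj) hnc (ha.1 t ht)
    (hb.1 t ht) (ha0 t ht) (hb0 t ht) n t

end
end

section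
/- Let Λ = Λ_1 ∪ … ∪ Λ_P ⊆ ℤ² be a disjoint union of generations satisfying the closure property (if three vertices of a rectangle lie in Λ then so does the fourth) and the genealogical properties (spouse/children, parents/sibling, non-degeneracy, faithfulness). Let b = (b_1,…,b_P) be a solution of the toy system with P modes on an interval I. Define r_n(t) := b_j(t) for n ∈ Λ_j (1 ≤ j ≤ P) and r_n(t) := 0 for n ∉ Λ. Then r is a solution of the resonant system RFNLS on I. -/
open scoped BigOperators ENNReal NNReal
open Complex

noncomputable section

/-! ### Auxiliary lemmas for Statement 16 -/

/-- The spread of a sequence `c : ℕ → ℂ` over the generations. -/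
def spreadFn (Λ : ℕ → Finset Z2) (P : ℕ) (c : ℕ → ℂ) (m : Z2) : ℂ :=
  ∑ k ∈ Finset.Icc 1 P, if m ∈ Λ k then c k else 0

lemma midpoint_eq {x y z : Z2} (hsum : y + z = x + x)
    (hsq : sq2 y + sq2 z = sq2 x + sq2 x) : y = z := by
  have h1 : y.1 + z.1 = x.1 + x.1 := by
    have := congrArg Prod.fst hsum; simpa using this
  have h2 : y.2 + z.2 = x.2 + x.2 := by
    have := congrArg Prod.snd hsum; simpa using this
  simp only [sq2] at hsq
  have e : (y.1 - z.1) ^ 2 + (y.2 - z.2) ^ 2 = 0 := by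
    linear_combination 2 * hsq - (y.1 + z.1 + x.1 + x.1) * h1 - (y.2 + z.2 + x.2 + x.2) * h2
  have f1 : y.1 = z.1 := by nlinarith [sq_nonneg (y.1 - z.1), sq_nonneg (y.2 - z.2)]
  have f2 : y.2 = z.2 := by nlinarith [sq_nonneg (y.1 - z.1), sq_nonneg (y.2 - z.2)]
  exact Prod.ext f1 f2

lemma rect_of_cond {p1 p2 p3 n : Z2} (hsum : p1 - p2 + p3 = n) (h1 : p1 ≠ n)
    (h3 : p3 ≠ n) (hw : omega4 p1 p2 p3 n = 0) : IsRectangle p1 p2 p3 n := by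
  have hpar : p1 + p3 = p2 + n := by
    rw [← hsum]; abel
  have hsq : sq2 p1 + sq2 p3 = sq2 p2 + sq2 n := by
    simp only [omega4] at hw; linarith
  have h13 : p1 ≠ p3 := by
    intro h
    have e1 : p2 + n = p1 + p1 := by rw [← hpar, ← h]
    have e2 : sq2 p2 + sq2 n = sq2 p1 + sq2 p1 := by rw [← hsq, ← h]
    have h2n : p2 = n := midpoint_eq e1 e2
    apply h1
    rw [h2n] at e1
    have c1 : n.1 + n.1 = p1.1 + p1.1 := by
      have := congrArg Prod.fst e1; simpa using this
    have c2 : n.2 + n.2 = p1.2 + p1.2 := by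
      have := congrArg Prod.snd e1; simpa using this
    exact Prod.ext (by omega) (by omega)
  have h2n : p2 ≠ n := by
    intro h
    apply h13
    apply midpoint_eq (x := n)
    · rw [h] at hpar; exact hpar
    · rw [h] at hsq; exact hsq
  have h12 : p1 ≠ p2 := by
    intro h; apply h3; rw [h] at hsum; simpa using hsum
  have h23 : p2 ≠ p3 := by
    intro h; apply h1; rw [← h] at hsum; simpa using hsum
  exact ⟨h12, h13, h1, h23, h2n, h3, hpar, hsq⟩

lemma IsRectangle.swap24 {a b c d : Z2} (h : IsRectangle a b c d) : IsRectangle a d c b := by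
  obtain ⟨h12, h13, h14, h23, h24, h34, hp, hq⟩ := h
  refine ⟨h14, h13, h12, h34.symm, h24.symm, h23.symm, ?_, ?_⟩
  · rw [hp]; exact add_comm _ _
  · linarith

lemma IsRectangle.cycle {a b c d : Z2} (h : IsRectangle a b c d) : IsRectangle d a b c := by
  obtain ⟨h12, h13, h14, h23, h24, h34, hp, hq⟩ := h
  refine ⟨h14.symm, h24.symm, h34.symm, h12, h13, h23, ?_, ?_⟩
  · rw [hp]; exact add_comm _ _
  · linarith

lemma gen_eq {Λ : ℕ → Finset Z2} {P : ℕ}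
    (hdisj : ∀ i ∈ Finset.Icc 1 P, ∀ j ∈ Finset.Icc 1 P, i ≠ j → Disjoint (Λ i) (Λ j))
    {i j : ℕ} {n : Z2} (hi : i ∈ Finset.Icc 1 P) (hj : j ∈ Finset.Icc 1 P)
    (hni : n ∈ Λ i) (hnj : n ∈ Λ j) : i = j := by
  by_contra h
  exact (Finset.disjoint_left.mp (hdisj i hi j hj h)) hni hnj

lemma spreadFn_mem {Λ : ℕ → Finset Z2} {P : ℕ}
    (hdisj : ∀ i ∈ Finset.Icc 1 P, ∀ j ∈ Finset.Icc 1 P, i ≠ j → Disjoint (Λ i) (Λ j))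
    {c : ℕ → ℂ} {j : ℕ} {n : Z2} (hj : j ∈ Finset.Icc 1 P) (hn : n ∈ Λ j) :
    spreadFn Λ P c n = c j := by
  rw [spreadFn, Finset.sum_eq_single_of_mem j hj, if_pos hn]
  intro k hk hkj
  rw [if_neg]
  intro hnk
  exact hkj (gen_eq hdisj hk hj hnk hn)

lemma spreadFn_not_mem {Λ : ℕ → Finset Z2} {P : ℕ} {c : ℕ → ℂ} {n : Z2}
    (hn : n ∉ genFinset Λ P) : spreadFn Λ P c n = 0 := by
  rw [spreadFn]
  apply Finset.sum_eq_zero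
  intro k hk
  rw [if_neg]
  intro hnk
  exact hn (Finset.mem_biUnion.mpr ⟨k, hk, hnk⟩)

lemma mem_of_spreadFn_ne {Λ : ℕ → Finset Z2} {P : ℕ} {c : ℕ → ℂ} {n : Z2}
    (h : spreadFn Λ P c n ≠ 0) : n ∈ genFinset Λ P := by
  by_contra hn; exact h (spreadFn_not_mem hn)

lemma classify {Λ : ℕ → Finset Z2} {P : ℕ}
    (hdisj : ∀ i ∈ Finset.Icc 1 P, ∀ j ∈ Finset.Icc 1 P, i ≠ j → Disjoint (Λ i) (Λ j))
    (hF : FaithfulGen Λ P)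
    {j : ℕ} {n p1 p2 p3 : Z2} (hj1 : 1 ≤ j) (hjP : j ≤ P) (hn : n ∈ Λ j)
    (h1 : p1 ∈ genFinset Λ P) (h2 : p2 ∈ genFinset Λ P) (h3 : p3 ∈ genFinset Λ P)
    (hrect : IsRectangle p1 p2 p3 n) :
    (2 ≤ j ∧ p1 ∈ Λ (j - 1) ∧ IsNuclearFamily Λ (j - 1) p1 n p3 p2)
    ∨ (j < P ∧ p1 ∈ Λ (j + 1) ∧ IsNuclearFamily Λ j n p1 p2 p3) := by
  have hnF : n ∈ genFinset Λ P :=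
    Finset.mem_biUnion.mpr ⟨j, Finset.mem_Icc.mpr ⟨hj1, hjP⟩, hn⟩
  obtain ⟨k, hk1, hkP, hcase | hcase⟩ := hF p1 p2 p3 n h1 h2 h3 hnF hrect
  · obtain ⟨m1, m3, m2, mn⟩ := hcase
    have hkj : k + 1 = j :=
      gen_eq hdisj (Finset.mem_Icc.mpr ⟨by omega, by omega⟩)
        (Finset.mem_Icc.mpr ⟨hj1, hjP⟩) mn hn
    have hk' : k = j - 1 := by omega
    have hk'' : j - 1 + 1 = j := by omega
    subst hk'
    left
    refine ⟨by omega, m1, hrect.swap24, m1, m3, ?_, ?_⟩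
    · rw [hk'']; exact hn
    · exact m2
  · obtain ⟨m2, mn, m1, m3⟩ := hcase
    have hkj : k = j :=
      gen_eq hdisj (Finset.mem_Icc.mpr ⟨by omega, by omega⟩)
        (Finset.mem_Icc.mpr ⟨hj1, hjP⟩) mn hn
    subst hkj
    right
    exact ⟨hkP, m1, hrect.cycle, hn, m2, m1, m3⟩

lemma parsum {Λ : ℕ → Finset Z2} {P : ℕ}
    (hdisj : ∀ i ∈ Finset.Icc 1 P, ∀ j ∈ Finset.Icc 1 P, i ≠ j → Disjoint (Λ i) (Λ j))
    (hPS : ParentsSibling Λ P) (c : ℕ → ℂ) (hc0 : c 0 = 0)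
    {j : ℕ} {n : Z2} (hj1 : 1 ≤ j) (hjP : j ≤ P) (hn : n ∈ Λ j) :
    ∃ T : Finset (Z2 × Z2 × Z2),
      (∀ p ∈ T, (p.1 - p.2.1 + p.2.2 = n ∧ p.1 ≠ n ∧ p.2.2 ≠ n ∧
          omega4 p.1 p.2.1 p.2.2 n = 0) ∧ p.1 ∈ Λ (j - 1) ∧ 2 ≤ j) ∧
      (∀ p : Z2 × Z2 × Z2, 2 ≤ j → IsNuclearFamily Λ (j - 1) p.1 n p.2.2 p.2.1 → p ∈ T) ∧
      ∑ p ∈ T, spreadFn Λ P c p.1 * (starRingEnd ℂ) (spreadFn Λ P c p.2.1) *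
          spreadFn Λ P c p.2.2 = 2 * (c (j - 1)) ^ 2 * (starRingEnd ℂ) (c j) := by
  rcases lt_or_ge j 2 with h2 | h2
  · refine ⟨∅, by simp, fun p hp => absurd hp (by omega), ?_⟩
    have hj : j = 1 := by omega
    subst hj
    simp [hc0]
  · have hj1' : 1 ≤ j - 1 := by omega
    have hjP' : j - 1 < P := by omega
    have hjj : j - 1 + 1 = j := by omega
    obtain ⟨n4, n1, n3, fam, uniq⟩ := hPS (j - 1) hj1' hjP' n (by rw [hjj]; exact hn)
    obtain ⟨⟨d12, d13, d14, d23, d24, d34, hpar, hsq⟩, hm1, hm3, hmn, hm4⟩ := fam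
    have hsum1 : n1 - n4 + n3 = n := by
      rw [sub_add_eq_add_sub, sub_eq_iff_eq_add]; exact hpar
    have hsum3 : n3 - n4 + n1 = n := by
      rw [sub_add_eq_add_sub, sub_eq_iff_eq_add, add_comm n3 n1]; exact hpar
    have hw1 : omega4 n1 n4 n3 n = 0 := by simp only [omega4]; linarith
    have hw3 : omega4 n3 n4 n1 n = 0 := by simp only [omega4]; linarith
    refine ⟨{(n1, n4, n3), (n3, n4, n1)}, ?_, ?_, ?_⟩
    · intro p hp
      simp only [Finset.mem_insert, Finset.mem_singleton] at hp
      rcases hp with rfl | rfl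
      · exact ⟨⟨hsum1, d12, Ne.symm d23, hw1⟩, hm1, h2⟩
      · exact ⟨⟨hsum3, Ne.symm d23, d12, hw3⟩, hm3, h2⟩
    · intro p _ fam'
      obtain ⟨h4, hcases⟩ := uniq p.1 p.2.2 p.2.1 fam'
      simp only [Finset.mem_insert, Finset.mem_singleton]
      rcases hcases with ⟨e1, e3⟩ | ⟨e1, e3⟩
      · left; exact Prod.ext e1 (Prod.ext h4 e3)
      · right; exact Prod.ext e1 (Prod.ext h4 e3)
    · have hT : ((n1, n4, n3) : Z2 × Z2 × Z2) ≠ (n3, n4, n1) :=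
        fun h => d13 (congrArg Prod.fst h)
      rw [Finset.sum_pair hT]
      have hm4' : n4 ∈ Λ j := by rw [← hjj]; exact hm4
      have hb1 : spreadFn Λ P c n1 = c (j - 1) :=
        spreadFn_mem hdisj (Finset.mem_Icc.mpr ⟨hj1', by omega⟩) hm1
      have hb3 : spreadFn Λ P c n3 = c (j - 1) :=
        spreadFn_mem hdisj (Finset.mem_Icc.mpr ⟨hj1', by omega⟩) hm3
      have hb4 : spreadFn Λ P c n4 = c j :=
        spreadFn_mem hdisj (Finset.mem_Icc.mpr ⟨hj1, hjP⟩) hm4'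
      simp only [hb1, hb3, hb4]
      ring

lemma childsum {Λ : ℕ → Finset Z2} {P : ℕ}
    (hdisj : ∀ i ∈ Finset.Icc 1 P, ∀ j ∈ Finset.Icc 1 P, i ≠ j → Disjoint (Λ i) (Λ j))
    (hSC : SpouseChildren Λ P) (c : ℕ → ℂ) (hcP : ∀ k, P < k → c k = 0)
    {j : ℕ} {n : Z2} (hj1 : 1 ≤ j) (hjP : j ≤ P) (hn : n ∈ Λ j) :
    ∃ T : Finset (Z2 × Z2 × Z2),
      (∀ p ∈ T, (p.1 - p.2.1 + p.2.2 = n ∧ p.1 ≠ n ∧ p.2.2 ≠ n ∧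
          omega4 p.1 p.2.1 p.2.2 n = 0) ∧ p.1 ∈ Λ (j + 1) ∧ j < P) ∧
      (∀ p : Z2 × Z2 × Z2, j < P → IsNuclearFamily Λ j n p.1 p.2.1 p.2.2 → p ∈ T) ∧
      ∑ p ∈ T, spreadFn Λ P c p.1 * (starRingEnd ℂ) (spreadFn Λ P c p.2.1) *
          spreadFn Λ P c p.2.2 = 2 * (c (j + 1)) ^ 2 * (starRingEnd ℂ) (c j) := by
  rcases lt_or_ge j P with hlt | hge
  · obtain ⟨n3, n2, n4, fam, uniq⟩ := hSC j hj1 hlt n hn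
    obtain ⟨⟨d12, d13, d14, d23, d24, d34, hpar, hsq⟩, hm1, hm3, hm2, hm4⟩ := fam
    have hsum2 : n2 - n3 + n4 = n := by
      rw [sub_add_eq_add_sub, sub_eq_iff_eq_add]; exact hpar.symm
    have hsum4 : n4 - n3 + n2 = n := by
      rw [sub_add_eq_add_sub, sub_eq_iff_eq_add, add_comm n4 n2]; exact hpar.symm
    have hw2 : omega4 n2 n3 n4 n = 0 := by simp only [omega4]; linarith
    have hw4 : omega4 n4 n3 n2 n = 0 := by simp only [omega4]; linarith
    refine ⟨{(n2, n3, n4), (n4, n3, n2)}, ?_, ?_, ?_⟩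
    · intro p hp
      simp only [Finset.mem_insert, Finset.mem_singleton] at hp
      rcases hp with rfl | rfl
      · exact ⟨⟨hsum2, Ne.symm d12, Ne.symm d14, hw2⟩, hm2, hlt⟩
      · exact ⟨⟨hsum4, Ne.symm d14, Ne.symm d12, hw4⟩, hm4, hlt⟩
    · intro p _ fam'
      obtain ⟨h3, hcases⟩ := uniq p.2.1 p.1 p.2.2 fam'
      simp only [Finset.mem_insert, Finset.mem_singleton]
      rcases hcases with ⟨e1, e3⟩ | ⟨e1, e3⟩
      · left; exact Prod.ext e1 (Prod.ext h3 e3)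
      · right; exact Prod.ext e1 (Prod.ext h3 e3)
    · have hT : ((n2, n3, n4) : Z2 × Z2 × Z2) ≠ (n4, n3, n2) :=
        fun h => d24 (congrArg Prod.fst h)
      rw [Finset.sum_pair hT]
      have hb2 : spreadFn Λ P c n2 = c (j + 1) :=
        spreadFn_mem hdisj (Finset.mem_Icc.mpr ⟨by omega, by omega⟩) hm2
      have hb4 : spreadFn Λ P c n4 = c (j + 1) :=
        spreadFn_mem hdisj (Finset.mem_Icc.mpr ⟨by omega, by omega⟩) hm4
      have hb3 : spreadFn Λ P c n3 = c j :=
        spreadFn_mem hdisj (Finset.mem_Icc.mpr ⟨hj1, hjP⟩) hm3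
      simp only [hb2, hb3, hb4]
      ring
  · refine ⟨∅, by simp, fun p hp => absurd hp (by omega), ?_⟩
    rw [hcP (j + 1) (by omega)]
    simp

lemma resRHS_spread_eq {Λ : ℕ → Finset Z2} {P : ℕ}
    (hdisj : ∀ i ∈ Finset.Icc 1 P, ∀ j ∈ Finset.Icc 1 P, i ≠ j → Disjoint (Λ i) (Λ j))
    (hSC : SpouseChildren Λ P) (hPS : ParentsSibling Λ P) (hF : FaithfulGen Λ P)
    (c : ℕ → ℂ) (hc0 : c 0 = 0) (hcP : ∀ k, P < k → c k = 0)
    {j : ℕ} {n : Z2} (hj1 : 1 ≤ j) (hjP : j ≤ P) (hn : n ∈ Λ j) :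
    resRHS (spreadFn Λ P c) n =
      Complex.I * (-((‖c j‖ : ℂ) ^ 2) * c j
        + 2 * (c (j + 1)) ^ 2 * (starRingEnd ℂ) (c j)
        + 2 * (c (j - 1)) ^ 2 * (starRingEnd ℂ) (c j)) := by
  obtain ⟨Tp, hTp1, hTp2, hTp3⟩ := parsum hdisj hPS c hc0 hj1 hjP hn
  obtain ⟨Tc, hTc1, hTc2, hTc3⟩ := childsum hdisj hSC c hcP hj1 hjP hn
  have hdisjT : Disjoint Tp Tc := by
    rw [Finset.disjoint_left]
    intro p hp hpc
    obtain ⟨_, hp1, h2j⟩ := hTp1 p hp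
    obtain ⟨_, hc1, hjP'⟩ := hTc1 p hpc
    have : j - 1 = j + 1 :=
      gen_eq hdisj (Finset.mem_Icc.mpr ⟨by omega, by omega⟩)
        (Finset.mem_Icc.mpr ⟨by omega, by omega⟩) hp1 hc1
    omega
  have hsupp : ∀ p : Z2 × Z2 × Z2, p ∉ Tp ∪ Tc →
      (if p.1 - p.2.1 + p.2.2 = n ∧ p.1 ≠ n ∧ p.2.2 ≠ n ∧
          omega4 p.1 p.2.1 p.2.2 n = 0 then
        spreadFn Λ P c p.1 * (starRingEnd ℂ) (spreadFn Λ P c p.2.1) *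
          spreadFn Λ P c p.2.2
      else 0) = 0 := by
    intro p hp
    split_ifs with hcnd
    · by_contra hne
      have f1 : spreadFn Λ P c p.1 ≠ 0 := fun h => hne (by rw [h]; ring)
      have f2 : spreadFn Λ P c p.2.1 ≠ 0 := fun h => hne (by rw [h]; simp)
      have f3 : spreadFn Λ P c p.2.2 ≠ 0 := fun h => hne (by rw [h]; ring)
      have hcls := classify hdisj hF hj1 hjP hn (mem_of_spreadFn_ne f1)
        (mem_of_spreadFn_ne f2) (mem_of_spreadFn_ne f3)
        (rect_of_cond hcnd.1 hcnd.2.1 hcnd.2.2.1 hcnd.2.2.2)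
      rcases hcls with ⟨h2j, _, fam'⟩ | ⟨hjlt, _, fam'⟩
      · exact hp (Finset.mem_union_left _ (hTp2 p h2j fam'))
      · exact hp (Finset.mem_union_right _ (hTc2 p hjlt fam'))
    · rfl
  have e1 : (∑ p ∈ Tp, if p.1 - p.2.1 + p.2.2 = n ∧ p.1 ≠ n ∧ p.2.2 ≠ n ∧
      omega4 p.1 p.2.1 p.2.2 n = 0 then
        spreadFn Λ P c p.1 * (starRingEnd ℂ) (spreadFn Λ P c p.2.1) *
          spreadFn Λ P c p.2.2 else 0) = 2 * (c (j - 1)) ^ 2 * (starRingEnd ℂ) (c j) := by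
    rw [← hTp3]
    exact Finset.sum_congr rfl fun p hp => if_pos (hTp1 p hp).1
  have e2 : (∑ p ∈ Tc, if p.1 - p.2.1 + p.2.2 = n ∧ p.1 ≠ n ∧ p.2.2 ≠ n ∧
      omega4 p.1 p.2.1 p.2.2 n = 0 then
        spreadFn Λ P c p.1 * (starRingEnd ℂ) (spreadFn Λ P c p.2.1) *
          spreadFn Λ P c p.2.2 else 0) = 2 * (c (j + 1)) ^ 2 * (starRingEnd ℂ) (c j) := by
    rw [← hTc3]
    exact Finset.sum_congr rfl fun p hp => if_pos (hTc1 p hp).1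
  simp only [resRHS]
  rw [tsum_eq_sum hsupp, Finset.sum_union hdisjT, e1, e2,
    spreadFn_mem hdisj (Finset.mem_Icc.mpr ⟨hj1, hjP⟩) hn]
  ring

lemma resRHS_spread_zero {Λ : ℕ → Finset Z2} {P : ℕ}
    (hclosed : RectClosed (genFinset Λ P : Set Z2)) (c : ℕ → ℂ) {n : Z2}
    (hn : n ∉ genFinset Λ P) : resRHS (spreadFn Λ P c) n = 0 := by
  have hzero : ∀ p : Z2 × Z2 × Z2,
      (if p.1 - p.2.1 + p.2.2 = n ∧ p.1 ≠ n ∧ p.2.2 ≠ n ∧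
          omega4 p.1 p.2.1 p.2.2 n = 0 then
        spreadFn Λ P c p.1 * (starRingEnd ℂ) (spreadFn Λ P c p.2.1) *
          spreadFn Λ P c p.2.2
      else 0) = 0 := by
    intro p
    split_ifs with hcnd
    · by_contra hne
      have f1 : spreadFn Λ P c p.1 ≠ 0 := fun h => hne (by rw [h]; ring)
      have f2 : spreadFn Λ P c p.2.1 ≠ 0 := fun h => hne (by rw [h]; simp)
      have f3 : spreadFn Λ P c p.2.2 ≠ 0 := fun h => hne (by rw [h]; ring)
      have hrect := rect_of_cond hcnd.1 hcnd.2.1 hcnd.2.2.1 hcnd.2.2.2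
      have : n ∈ (genFinset Λ P : Set Z2) :=
        hclosed p.1 p.2.1 p.2.2 n hrect
          (Finset.mem_coe.mpr (mem_of_spreadFn_ne f1))
          (Finset.mem_coe.mpr (mem_of_spreadFn_ne f2))
          (Finset.mem_coe.mpr (mem_of_spreadFn_ne f3))
      exact hn (Finset.mem_coe.mp this)
    · rfl
  simp only [resRHS, spreadFn_not_mem hn]
  rw [tsum_congr hzero, tsum_zero]
  simp


/-- If `Λ = Λ_1 ∪ … ∪ Λ_P` is a disjoint union of generations
closed under completing rectangles and satisfying the genealogical properties, and
`b` solves the toy system with `P` modes on `I`, then the spread function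
`r_n := b_j` for `n ∈ Λ_j` (and `0` off `Λ`) solves the resonant system RFNLS. -/
theorem toy_solution_gives_RFNLS_solution
    (P : ℕ) (Λ : ℕ → Finset Z2)
    (hdisj : ∀ i ∈ Finset.Icc 1 P, ∀ j ∈ Finset.Icc 1 P, i ≠ j → Disjoint (Λ i) (Λ j))
    (hclosed : RectClosed (genFinset Λ P : Set Z2))
    (hSC : SpouseChildren Λ P) (hPS : ParentsSibling Λ P)
    (hND : NonDegenerate Λ) (hF : FaithfulGen Λ P)
    (I : Set ℝ) (hI : I.OrdConnected)
    (b : ℝ → ℕ → ℂ) (hb : IsToySolution P I b) :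
    IsRFNLSSolution I
      (fun t n => ∑ j ∈ Finset.Icc 1 P, if n ∈ Λ j then b t j else 0) := by
  obtain ⟨hb0, hbP, hbderiv⟩ := hb
  have hzero : ∀ t, ∀ m, m ∉ genFinset Λ P →
      ‖spreadFn Λ P (b t) m‖ = 0 := fun t m hm => by
    rw [spreadFn_not_mem hm, norm_zero]
  refine ⟨?_, ?_, ?_⟩
  · intro t ht
    apply summable_of_ne_finset_zero (s := genFinset Λ P)
    intro m hm
    exact hzero t m hm
  · intro t1 ht1 t2 ht2
    have hIcc : Set.Icc t1 t2 ⊆ I := hI.out ht1 ht2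
    have hcont : ContinuousOn (fun t => ∑ k ∈ Finset.Icc 1 P, ‖b t k‖) (Set.Icc t1 t2) := by
      apply continuousOn_finset_sum
      intro k hk
      have hck : ContinuousOn (fun t => b t k) (Set.Icc t1 t2) := fun x hx =>
        ((hbderiv k (Finset.mem_Icc.mp hk).1 (Finset.mem_Icc.mp hk).2 x
          (hIcc hx)).continuousWithinAt).mono hIcc
      exact hck.norm
    obtain ⟨C, hC⟩ := isCompact_Icc.exists_bound_of_continuousOn hcont
    refine ⟨(genFinset Λ P).card * C, ?_⟩
    intro t ht
    have hgC : ∑ k ∈ Finset.Icc 1 P, ‖b t k‖ ≤ C :=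
      le_trans (le_abs_self _) (by simpa using hC t ht.1)
    have hbound : ∀ m ∈ genFinset Λ P,
        ‖spreadFn Λ P (b t) m‖ ≤ ∑ k ∈ Finset.Icc 1 P, ‖b t k‖ := by
      intro m _
      refine le_trans (norm_sum_le _ _) (Finset.sum_le_sum ?_)
      intro k _
      split_ifs
      · exact le_refl _
      · simp
    calc (∑' m : Z2, ‖spreadFn Λ P (b t) m‖)
        = ∑ m ∈ genFinset Λ P, ‖spreadFn Λ P (b t) m‖ :=
          tsum_eq_sum (fun m hm => hzero t m hm)
      _ ≤ ∑ _m ∈ genFinset Λ P, (∑ k ∈ Finset.Icc 1 P, ‖b t k‖) :=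
          Finset.sum_le_sum hbound
      _ = (genFinset Λ P).card * (∑ k ∈ Finset.Icc 1 P, ‖b t k‖) := by
          rw [Finset.sum_const, nsmul_eq_mul]
      _ ≤ (genFinset Λ P).card * C :=
          mul_le_mul_of_nonneg_left hgC (Nat.cast_nonneg _)
  · intro m t ht
    show HasDerivWithinAt (fun τ => spreadFn Λ P (b τ) m)
      (resRHS (spreadFn Λ P (b t)) m) I t
    by_cases hm : m ∈ genFinset Λ P
    · obtain ⟨k, hk, hmem⟩ := Finset.mem_biUnion.mp hm
      obtain ⟨hk1, hkP⟩ := Finset.mem_Icc.mp hk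
      have hfun : (fun τ => spreadFn Λ P (b τ) m) = fun τ => b τ k :=
        funext fun τ => spreadFn_mem hdisj hk hmem
      have hres := resRHS_spread_eq hdisj hSC hPS hF (b t) (hb0 t ht)
        (fun k' hk' => hbP t ht k' hk') hk1 hkP hmem
      rw [hfun, hres]
      exact hbderiv k hk1 hkP t ht
    · have hfun : (fun τ => spreadFn Λ P (b τ) m) = fun _ => (0 : ℂ) :=
        funext fun τ => spreadFn_not_mem hm
      rw [hfun, resRHS_spread_zero hclosed (b t) hm]
      exact hasDerivWithinAt_const t I 0

end
end
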